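/- arXiv:1808.04156 — 7 statements merged into one kernel-verified Lean document; each statement's English description precedes it below -/
import Mathlib

section
/- If (g, [·,·], ▷) is a post-Lie algebra, then (g, −[·,·], ▶) is also a post-Lie algebra, where x ▶ y := x ▷ y + [x,y]. That is, for all x,y,z ∈ g: x ▶ (−[y,z]) = −[x ▶ y, z] − [y, x ▶ z], and (−[x,y]) ▶ z = a_▶(x,y,z) − a_▶(y,x,z). -/
/-- If `(g, [·,·], ▷)` is a post-Lie algebra, then
`(g, −[·,·], ▶)`, with `x ▶ y := x ▷ y + [x,y]`, is also a post-Lie algebra: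
for all `x y z`, `x ▶ (−[y,z]) = −[x ▶ y, z] − [y, x ▶ z]` and
`(−[x,y]) ▶ z = a_▶(x,y,z) − a_▶(y,x,z)`. -/
theorem postLie_adjoint
    {k : Type*} {g : Type*} [Field k] [LieRing g] [LieAlgebra k g]
    (t : g →ₗ[k] g →ₗ[k] g)
    (pl1 : ∀ x y z : g, t x ⁅y, z⁆ = ⁅t x y, z⁆ + ⁅y, t x z⁆)
    (pl2 : ∀ x y z : g, t ⁅x, y⁆ z =
      (t x (t y z) - t (t x y) z) - (t y (t x z) - t (t y x) z))
    (s : g → g → g)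
    (hs : ∀ x y : g, s x y = t x y + ⁅x, y⁆) :
    (∀ x y z : g, s x (-⁅y, z⁆) = -⁅s x y, z⁆ - ⁅y, s x z⁆) ∧
    (∀ x y z : g, s (-⁅x, y⁆) z =
      (s x (s y z) - s (s x y) z) - (s y (s x z) - s (s y x) z)) := by
  constructor <;> intro x y z <;>
    simp only [hs, map_neg, map_add, LinearMap.neg_apply, LinearMap.add_apply,
      pl1, pl2, lie_add, add_lie, lie_neg, neg_lie, lie_lie, sub_eq_add_neg, neg_add_rev, neg_neg] <;>
    abel
end

section
/- Let A be an associative algebra. Define on the space of continuous functions U, V : [0,∞) → A the product (U ↷ V)(t) := ∫₀ᵗ [U(s), V(t)] ds, where [a,b] = ab − ba. Then ↷ satisfies the left pre-Lie identity: (U ↷ V) ↷ W − U ↷ (V ↷ W) = (V ↷ U) ↷ W − V ↷ (U ↷ W). -/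
open intervalIntegral

/-! Writing `∫U` for the primitive `t ↦ ∫₀ᵗ U`, the product is `(U ↷ V)(t) = ⁅∫U t, V t⁆`.
Since `⁅∫U, ∫V⁆` vanishes at `0` and has derivative `U ↷ V - V ↷ U`, the fundamental theorem of
calculus gives `∫(U ↷ V) - ∫(V ↷ U) = ⁅∫U, ∫V⁆`. Both sides of the identity therefore differ by
`⁅⁅∫U, ∫V⁆, W⁆ - ⁅∫U, ⁅∫V, W⁆⁆ + ⁅∫V, ⁅∫U, W⁆⁆`, which is zero by the Jacobi identity. -/

section

variable {A : Type*} [NormedRing A] [NormedAlgebra ℝ A]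

theorem HasDerivAt.lie {f g : ℝ → A} {f' g' : A} {x : ℝ} (hf : HasDerivAt f f' x)
    (hg : HasDerivAt g g' x) :
    HasDerivAt (fun y => ⁅f y, g y⁆) (⁅f', g x⁆ + ⁅f x, g'⁆) x := by
  simp only [Ring.lie_def]
  exact ((hf.mul hg).sub (hg.mul hf)).congr_deriv (by abel)

theorem intervalIntegral.integral_lie_const [CompleteSpace A] {F : ℝ → A} {a b : ℝ}
    {μ : MeasureTheory.Measure ℝ} (hF : IntervalIntegrable F μ a b) (c : A) :
    ∫ s in a..b, ⁅F s, c⁆ ∂μ = ⁅∫ s in a..b, F s ∂μ, c⁆ := by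
  have h := ((ContinuousLinearMap.mul ℝ A).flip c - ContinuousLinearMap.mul ℝ A c)
    |>.intervalIntegral_comp_comm hF
  simpa only [sub_apply, ContinuousLinearMap.flip_apply, ContinuousLinearMap.mul_apply',
    Ring.lie_def] using h

theorem Continuous.lie_primitive {U V : ℝ → A} {a : ℝ} (hU : Continuous U)
    (hV : Continuous V) : Continuous fun s => ⁅∫ r in a..s, U r, V s⁆ := by
  have hIU : Continuous fun s => ∫ r in a..s, U r :=
    continuous_primitive (fun _ _ => hU.intervalIntegrable _ _) a
  simp only [Ring.lie_def]
  fun_prop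

theorem integral_lie_primitive_sub_integral_lie_primitive [CompleteSpace A] {U V : ℝ → A}
    {a : ℝ} (hU : Continuous U) (hV : Continuous V) (t : ℝ) :
    (∫ s in a..t, ⁅∫ r in a..s, U r, V s⁆) - ∫ s in a..t, ⁅∫ r in a..s, V r, U s⁆
      = ⁅∫ r in a..t, U r, ∫ r in a..t, V r⁆ := by
  have hderiv : ∀ x ∈ Set.uIcc a t,
      HasDerivAt (fun y => ⁅∫ r in a..y, U r, ∫ r in a..y, V r⁆)
        (⁅∫ r in a..x, U r, V x⁆ - ⁅∫ r in a..x, V r, U x⁆) x := fun x _ => by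
    refine ((hU.integral_hasStrictDerivAt a x).hasDerivAt.lie
      (hV.integral_hasStrictDerivAt a x).hasDerivAt).congr_deriv ?_
    simp only [Ring.lie_def]
    abel
  rw [← integral_sub ((hU.lie_primitive hV).intervalIntegrable _ _)
    ((hV.lie_primitive hU).intervalIntegrable _ _),
    integral_eq_sub_of_hasDerivAt hderiv
      (((hU.lie_primitive hV).sub (hV.lie_primitive hU)).intervalIntegrable _ _)]
  simp [Ring.lie_def]

end

theorem integral_commutator_preLie_general
    {A : Type*} [NormedRing A] [NormedAlgebra ℝ A] [CompleteSpace A]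
    (U V W : ℝ → A) (hU : Continuous U) (hV : Continuous V)
    (pr : (ℝ → A) → (ℝ → A) → (ℝ → A))
    (hpr : ∀ (F G : ℝ → A) (t : ℝ),
      pr F G t = ∫ s in (0:ℝ)..t, (F s * G t - G t * F s)) :
    ∀ t : ℝ, 0 ≤ t →
      pr (pr U V) W t - pr U (pr V W) t
        = pr (pr V U) W t - pr V (pr U W) t := by
  intro t _
  have hpr_lie : ∀ F, Continuous F → ∀ G x, pr F G x = ⁅∫ s in (0:ℝ)..x, F s, G x⁆ :=
    fun F hF G x => by
      rw [hpr, ← integral_lie_const (hF.intervalIntegrable _ _)]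
      simp only [Ring.lie_def]
  have hUV : pr U V = fun s => ⁅∫ r in (0:ℝ)..s, U r, V s⁆ := funext (hpr_lie U hU V)
  have hVU : pr V U = fun s => ⁅∫ r in (0:ℝ)..s, V r, U s⁆ := funext (hpr_lie V hV U)
  rw [hUV, hVU, hpr_lie _ (hU.lie_primitive hV), hpr_lie _ (hV.lie_primitive hU),
    hpr_lie U hU, hpr_lie V hV, hpr_lie V hV, hpr_lie U hU, eq_add_of_sub_eq
      (integral_lie_primitive_sub_integral_lie_primitive hU hV t)]
  simp only [Ring.lie_def]
  noncomm_ring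

/-- On continuous functions `U, V : [0,∞) → A` into an
associative (normed) algebra `A`, the product
`(U ↷ V)(t) := ∫₀ᵗ [U(s), V(t)] ds` satisfies the left pre-Lie identity. -/
theorem integral_commutator_preLie
    {A : Type*} [NormedRing A] [NormedAlgebra ℝ A] [CompleteSpace A]
    (U V W : ℝ → A) (hU : Continuous U) (hV : Continuous V)
    (hW : Continuous W)
    (pr : (ℝ → A) → (ℝ → A) → (ℝ → A))
    (hpr : ∀ (F G : ℝ → A) (t : ℝ),
      pr F G t = ∫ s in (0:ℝ)..t, (F s * G t - G t * F s)) :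
    ∀ t : ℝ, 0 ≤ t →
      pr (pr U V) W t - pr U (pr V W) t
        = pr (pr V U) W t - pr V (pr U W) t :=
  integral_commutator_preLie_general U V W hU hV pr hpr
end

section
/- Let M be a smooth manifold with an affine connection ∇ that is flat (R = 0) and has parallel torsion (∇T = 0). Then the vector fields X(M) with product X ▷ Y := ∇_X Y and bracket given by the negative torsion −T(X,Y) = ⟦X,Y⟧ − X ▷ Y + Y ▷ X form a post-Lie algebra. -/
/-- Let `X` be the Lie algebra of vector fields on a manifold
(with Jacobi bracket `⁅·,·⁆`), equipped with an affine connection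
`∇ : X → X → X` (an `ℝ`-bilinear map, `X ▷ Y := ∇_X Y`).  Assume the
connection is flat (`R = 0`) and has parallel torsion (`∇T = 0`), where
`T(X,Y) := ∇_X Y − ∇_Y X − ⁅X,Y⁆` and
`R(X,Y)Z := ∇_X ∇_Y Z − ∇_Y ∇_X Z − ∇_{⁅X,Y⁆} Z`.
Then `(X, −T(·,·), ▷ = ∇)` is a post-Lie algebra: `−T` is skew-symmetric and
satisfies the Jacobi identity, and the two post-Lie axioms hold. -/
theorem flat_constantTorsion_postLie
    {X : Type*} [LieRing X] [LieAlgebra ℝ X]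
    (nabla : X →ₗ[ℝ] X →ₗ[ℝ] X)
    (T : X → X → X)
    (hT : ∀ x y : X, T x y = nabla x y - nabla y x - ⁅x, y⁆)
    (flat : ∀ x y z : X,
      nabla x (nabla y z) - nabla y (nabla x z) - nabla ⁅x, y⁆ z = 0)
    (parallelT : ∀ x y z : X,
      nabla x (T y z) = T (nabla x y) z + T y (nabla x z))
    (br : X → X → X) (hbr : ∀ x y : X, br x y = - T x y) :
    (∀ x y : X, br x y = - br y x) ∧
    (∀ x y z : X, br (br x y) z + br (br y z) x + br (br z x) y = 0) ∧
    (∀ x y z : X, nabla x (br y z) = br (nabla x y) z + br y (nabla x z)) ∧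
    (∀ x y z : X, nabla (br x y) z =
      (nabla x (nabla y z) - nabla (nabla x y) z)
        - (nabla y (nabla x z) - nabla (nabla y x) z)) := by
  have hflat : ∀ x y z : X, nabla ⁅x, y⁆ z
      = nabla x (nabla y z) - nabla y (nabla x z) := by
    intro x y z
    have h := flat x y z
    rw [sub_eq_zero] at h
    exact h.symm
  have hpar : ∀ x y z : X, nabla z ⁅x, y⁆
      = (nabla z (nabla x y) - nabla z (nabla y x))
        - ((nabla (nabla z x) y - nabla y (nabla z x) - ⁅nabla z x, y⁆)
          + (nabla x (nabla z y) - nabla (nabla z y) x - ⁅x, nabla z y⁆)) := by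
    intro x y z
    have h := parallelT z x y
    rw [hT x y, hT (nabla z x) y, hT x (nabla z y), map_sub, map_sub] at h
    rw [← h]; abel
  have key : ∀ x y z : X, br (br x y) z =
      ⁅⁅x, y⁆, z⁆ - ⁅nabla x y, z⁆ + ⁅nabla y x, z⁆
        + ⁅nabla z x, y⁆ - ⁅nabla z y, x⁆
        - nabla x (nabla y z) + nabla y (nabla x z)
        + nabla (nabla x y) z - nabla (nabla y x) z
        - nabla (nabla z x) y + nabla y (nabla z x)
        - nabla x (nabla z y) + nabla (nabla z y) x := by
    intro x y z
    rw [hbr, hbr, hT, hT]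
    simp only [map_sub, map_neg, LinearMap.sub_apply, LinearMap.neg_apply,
      lie_sub, sub_lie, lie_neg, neg_lie]
    rw [hflat x y z, hpar x y z, ← lie_skew x (nabla z y)]
    abel
  refine ⟨?_, ?_, ?_, ?_⟩
  · intro x y
    rw [hbr, hbr, hT, hT, ← lie_skew x y]
    abel
  · intro x y z
    rw [key x y z, key y z x, key z x y]
    have hj : ⁅⁅x, y⁆, z⁆ = -⁅⁅y, z⁆, x⁆ - ⁅⁅z, x⁆, y⁆ := by
      have h := lie_jacobi x y z
      have h2 : ⁅z, ⁅x, y⁆⁆ = -⁅x, ⁅y, z⁆⁆ - ⁅y, ⁅z, x⁆⁆ := by rw [← sub_eq_zero, ← h]; abel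
      rw [← lie_skew ⁅x, y⁆ z, ← lie_skew ⁅y, z⁆ x, ← lie_skew ⁅z, x⁆ y, h2]
      abel
    rw [hj]
    abel
  · intro x y z
    rw [hbr y z, hbr (nabla x y) z, hbr y (nabla x z), map_neg, parallelT]
    abel
  · intro x y z
    rw [hbr, hT, map_neg, map_sub, map_sub, LinearMap.neg_apply,
      LinearMap.sub_apply, LinearMap.sub_apply, hflat x y z]
    abel
end

section
/- The space 𝔱 of maps ℝ → gl(n,ℝ) × ℝ, identified with pairs (H(t), h) with h constant, is closed under the bracket ⟦(H,h),(K,k)⟧ := ([H(t),K(t)] + h·K'(t) − k·H'(t), 0), and this bracket satisfies skew-symmetry and the Jacobi identity, making 𝔱 a Lie algebra. -/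
/-- Entrywise time-derivative of a matrix-valued function. -/
noncomputable def matDeriv {n : ℕ} (H : ℝ → Matrix (Fin n) (Fin n) ℝ) :
    ℝ → Matrix (Fin n) (Fin n) ℝ :=
  fun t => Matrix.of fun i j => deriv (fun s => H s i j) t

section aux
variable {n : ℕ}

/-- Entrywise smoothness of a matrix-valued curve. -/
def SmQ (A : ℝ → Matrix (Fin n) (Fin n) ℝ) : Prop :=
  ∀ i j, ContDiff ℝ (⊤ : ℕ∞) fun t => A t i j

lemma SmQ.deriv' {A : ℝ → Matrix (Fin n) (Fin n) ℝ} (hA : SmQ A) : SmQ (matDeriv A) := by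
  intro i j
  have := ((contDiff_succ_iff_deriv (n := (⊤ : ℕ∞))).mp ((hA i j).of_le (by simp))).2.2
  simpa [matDeriv] using this

lemma smQ_bracket (A B : ℝ → Matrix (Fin n) (Fin n) ℝ) (a b : ℝ)
    (hA : SmQ A) (hB : SmQ B) :
    SmQ (fun t => (A t * B t - B t * A t) + a • matDeriv B t - b • matDeriv A t) := by
  intro i j
  simp only [Matrix.sub_apply, Matrix.add_apply, Matrix.smul_apply, Matrix.mul_apply,
    matDeriv, Matrix.of_apply, smul_eq_mul]
  exact (((ContDiff.sum fun k _ => (hA i k).mul (hB k j)).sub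
    (ContDiff.sum fun k _ => (hB i k).mul (hA k j))).add
    (contDiff_const.mul (hB.deriv' i j))).sub (contDiff_const.mul (hA.deriv' i j))

lemma matDeriv_br (A B : ℝ → Matrix (Fin n) (Fin n) ℝ) (a b : ℝ)
    (hA : SmQ A) (hB : SmQ B) (t : ℝ) :
    matDeriv (fun s => (A s * B s - B s * A s) + a • matDeriv B s - b • matDeriv A s) t
      = (matDeriv A t * B t + A t * matDeriv B t
          - (matDeriv B t * A t + B t * matDeriv A t))
        + a • matDeriv (matDeriv B) t - b • matDeriv (matDeriv A) t := by
  have dA : ∀ i j, Differentiable ℝ fun s => A s i j := fun i j =>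
    (hA i j).differentiable (by simp)
  have dB : ∀ i j, Differentiable ℝ fun s => B s i j := fun i j =>
    (hB i j).differentiable (by simp)
  have dA' : ∀ i j, Differentiable ℝ (deriv fun s => A s i j) := fun i j =>
    (hA.deriv' i j).differentiable (by simp)
  have dB' : ∀ i j, Differentiable ℝ (deriv fun s => B s i j) := fun i j =>
    (hB.deriv' i j).differentiable (by simp)
  ext i j
  simp only [matDeriv, Matrix.of_apply, Matrix.sub_apply, Matrix.add_apply,
    Matrix.smul_apply, Matrix.mul_apply, smul_eq_mul]
  have hf1 : Differentiable ℝ fun s => ∑ k, A s i k * B s k j :=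
    Differentiable.fun_sum fun k _ => (dA i k).mul (dB k j)
  have hf2 : Differentiable ℝ fun s => ∑ k, B s i k * A s k j :=
    Differentiable.fun_sum fun k _ => (dB i k).mul (dA k j)
  have hf3 : Differentiable ℝ fun s => a * deriv (fun u => B u i j) s :=
    (dB' i j).const_mul a
  have hf4 : Differentiable ℝ fun s => b * deriv (fun u => A u i j) s :=
    (dA' i j).const_mul b
  rw [deriv_fun_sub (((hf1.fun_sub hf2).fun_add hf3).differentiableAt) (hf4.differentiableAt),
    deriv_fun_add ((hf1.fun_sub hf2).differentiableAt) (hf3.differentiableAt),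
    deriv_fun_sub (hf1.differentiableAt) (hf2.differentiableAt),
    deriv_fun_sum (fun k _ => ((dA i k).fun_mul (dB k j)).differentiableAt),
    deriv_fun_sum (fun k _ => ((dB i k).fun_mul (dA k j)).differentiableAt),
    deriv_const_mul a ((dB' i j).differentiableAt),
    deriv_const_mul b ((dA' i j).differentiableAt)]
  simp only [deriv_fun_mul ((dA _ _).differentiableAt) ((dB _ _).differentiableAt),
    deriv_fun_mul ((dB _ _).differentiableAt) ((dA _ _).differentiableAt),
    Finset.sum_add_distrib]

end aux

/-- The space `𝔱` of pairs `(H(t), h)`, with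
`H : ℝ → gl(n,ℝ)` smooth and `h ∈ ℝ` constant, is closed under the bracket
`⟦(H,h),(K,k)⟧ := ([H,K] + h·K' − k·H', 0)` (it lands again in `𝔱`, with
zero—hence constant—scalar part and smooth matrix part), and this bracket is
skew-symmetric and satisfies the Jacobi identity, making `𝔱` a Lie algebra. -/
theorem quasiRightInvariant_lieAlgebra {n : ℕ}
    (br : ((ℝ → Matrix (Fin n) (Fin n) ℝ) × ℝ) →
      ((ℝ → Matrix (Fin n) (Fin n) ℝ) × ℝ) →
      ((ℝ → Matrix (Fin n) (Fin n) ℝ) × ℝ))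
    (hbr : ∀ x y : (ℝ → Matrix (Fin n) (Fin n) ℝ) × ℝ,
      br x y = (fun t => (x.1 t * y.1 t - y.1 t * x.1 t)
        + x.2 • matDeriv y.1 t - y.2 • matDeriv x.1 t, 0)) :
    ∀ x y z : (ℝ → Matrix (Fin n) (Fin n) ℝ) × ℝ,
      (∀ i j : Fin n, ContDiff ℝ (⊤ : ℕ∞) (fun t => x.1 t i j)) →
      (∀ i j : Fin n, ContDiff ℝ (⊤ : ℕ∞) (fun t => y.1 t i j)) →
      (∀ i j : Fin n, ContDiff ℝ (⊤ : ℕ∞) (fun t => z.1 t i j)) →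
      ((∀ i j : Fin n, ContDiff ℝ (⊤ : ℕ∞) (fun t => (br x y).1 t i j)) ∧
       (br x y).2 = 0 ∧
       br x y = - br y x ∧
       br (br x y) z + br (br y z) x + br (br z x) y = 0) := by
  intro x y z hx hy hz
  refine ⟨?_, ?_, ?_, ?_⟩
  · rw [hbr]
    exact smQ_bracket x.1 y.1 x.2 y.2 hx hy
  · rw [hbr]
  · rw [hbr x y, hbr y x]
    refine Prod.ext ?_ (by simp)
    funext t
    simp only [Prod.fst_neg, Pi.neg_apply]
    abel
  · simp only [hbr]
    refine Prod.ext ?_ (by simp)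
    funext t
    simp only [Prod.mk_add_mk, Prod.fst_add, Prod.snd_zero, Prod.fst_zero, zero_smul,
      Pi.add_apply, Pi.zero_apply]
    rw [matDeriv_br x.1 y.1 x.2 y.2 hx hy t, matDeriv_br y.1 z.1 y.2 z.2 hy hz t,
      matDeriv_br z.1 x.1 z.2 x.2 hz hx t]
    simp only [smul_sub, smul_add, sub_mul, mul_sub, add_mul, mul_add, smul_smul,
      mul_smul_comm, smul_mul_assoc, mul_assoc]
    module
end

section
/- On the space 𝔱 of pairs (H(t), h) with H : ℝ → gl(n,ℝ) smooth and h ∈ ℝ constant, define (H,h) ▷ (K,k) := (h·K'(t), 0) and the bracket [(H,h),(K,k)]_𝔱 := ([H(t),K(t)], 0). Then (𝔱, [·,·]_𝔱, ▷) is a post-Lie algebra. -/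
lemma entry_mul_diff {n : ℕ} (Y Z : ℝ → Matrix (Fin n) (Fin n) ℝ)
    (hY : ∀ i j : Fin n, ContDiff ℝ (⊤ : ℕ∞) (fun t => Y t i j))
    (hZ : ∀ i j : Fin n, ContDiff ℝ (⊤ : ℕ∞) (fun t => Z t i j)) (t : ℝ) (i j : Fin n) :
    DifferentiableAt ℝ (fun s => (Y s * Z s) i j) t := by
  simp only [Matrix.mul_apply]
  exact DifferentiableAt.fun_sum fun k _ =>
    ((hY i k).differentiable (by simp) t).mul ((hZ k j).differentiable (by simp) t)

lemma matDeriv_mul {n : ℕ} (Y Z : ℝ → Matrix (Fin n) (Fin n) ℝ)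
    (hY : ∀ i j : Fin n, ContDiff ℝ (⊤ : ℕ∞) (fun t => Y t i j))
    (hZ : ∀ i j : Fin n, ContDiff ℝ (⊤ : ℕ∞) (fun t => Z t i j)) (t : ℝ) :
    matDeriv (fun s => Y s * Z s) t = matDeriv Y t * Z t + Y t * matDeriv Z t := by
  ext i j
  simp only [matDeriv, Matrix.of_apply, Matrix.mul_apply, Matrix.add_apply]
  rw [deriv_fun_sum (fun k _ => ((hY i k).differentiable (by simp) t).fun_mul
    ((hZ k j).differentiable (by simp) t))]
  rw [← Finset.sum_add_distrib]
  refine Finset.sum_congr rfl fun k _ => ?_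
  rw [deriv_fun_mul ((hY i k).differentiable (by simp) t) ((hZ k j).differentiable (by simp) t)]

lemma matDeriv_comm {n : ℕ} (Y Z : ℝ → Matrix (Fin n) (Fin n) ℝ)
    (hY : ∀ i j : Fin n, ContDiff ℝ (⊤ : ℕ∞) (fun t => Y t i j))
    (hZ : ∀ i j : Fin n, ContDiff ℝ (⊤ : ℕ∞) (fun t => Z t i j)) (t : ℝ) :
    matDeriv (fun s => Y s * Z s - Z s * Y s) t =
      (matDeriv Y t * Z t + Y t * matDeriv Z t)
        - (matDeriv Z t * Y t + Z t * matDeriv Y t) := by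
  have h : matDeriv (fun s => Y s * Z s - Z s * Y s) t
      = matDeriv (fun s => Y s * Z s) t - matDeriv (fun s => Z s * Y s) t := by
    ext i j
    simp only [matDeriv, Matrix.of_apply, Matrix.sub_apply]
    exact deriv_sub (entry_mul_diff Y Z hY hZ t i j) (entry_mul_diff Z Y hZ hY t i j)
  rw [h, matDeriv_mul Y Z hY hZ, matDeriv_mul Z Y hZ hY]

/-- On the space `𝔱` of pairs `(H(t), h)` with `H` smooth and
`h ∈ ℝ`, define `(H,h) ▷ (K,k) := (h·K', 0)` and
`[(H,h),(K,k)]_𝔱 := ([H,K], 0)`.  Then `(𝔱, [·,·]_𝔱, ▷)` is a post-Lie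
algebra: `[·,·]_𝔱` is a Lie bracket and the two post-Lie axioms hold. -/
theorem cartan_postLie {n : ℕ}
    (tr br : ((ℝ → Matrix (Fin n) (Fin n) ℝ) × ℝ) →
      ((ℝ → Matrix (Fin n) (Fin n) ℝ) × ℝ) →
      ((ℝ → Matrix (Fin n) (Fin n) ℝ) × ℝ))
    (htr : ∀ x y : (ℝ → Matrix (Fin n) (Fin n) ℝ) × ℝ,
      tr x y = (fun t => x.2 • matDeriv y.1 t, 0))
    (hbr : ∀ x y : (ℝ → Matrix (Fin n) (Fin n) ℝ) × ℝ,
      br x y = (fun t => x.1 t * y.1 t - y.1 t * x.1 t, 0)) :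
    ∀ x y z : (ℝ → Matrix (Fin n) (Fin n) ℝ) × ℝ,
      (∀ i j : Fin n, ContDiff ℝ (⊤ : ℕ∞) (fun t => x.1 t i j)) →
      (∀ i j : Fin n, ContDiff ℝ (⊤ : ℕ∞) (fun t => y.1 t i j)) →
      (∀ i j : Fin n, ContDiff ℝ (⊤ : ℕ∞) (fun t => z.1 t i j)) →
      (br x y = - br y x ∧
       br (br x y) z + br (br y z) x + br (br z x) y = 0 ∧
       tr x (br y z) = br (tr x y) z + br y (tr x z) ∧
       tr (br x y) z =
         (tr x (tr y z) - tr (tr x y) z) - (tr y (tr x z) - tr (tr y x) z)) := by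
  intro x y z hx hy hz
  refine ⟨?_, ?_, ?_, ?_⟩
  · simp only [hbr]
    refine Prod.ext ?_ (by simp)
    funext t
    simp only [Prod.fst_neg, Pi.neg_apply]
    noncomm_ring
  · simp only [hbr]
    refine Prod.ext ?_ (by simp)
    funext t
    simp only [Prod.fst_add, Pi.add_apply, Prod.fst_zero, Pi.zero_apply]
    noncomm_ring
  · simp only [htr, hbr]
    refine Prod.ext ?_ (by simp)
    funext t
    simp only [Prod.fst_add, Pi.add_apply]
    rw [matDeriv_comm y.1 z.1 hy hz]
    simp only [smul_sub, smul_add, Matrix.smul_mul, Matrix.mul_smul]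
    abel
  · simp only [htr, hbr]
    refine Prod.ext ?_ (by simp)
    funext t
    ext i j
    simp only [Prod.fst_sub, Pi.sub_apply, Matrix.sub_apply, Matrix.smul_apply, matDeriv,
      Matrix.of_apply, smul_eq_mul]
    rw [deriv_const_mul_field, deriv_const_mul_field]
    simp only [mul_zero, zero_mul, deriv_const']
    ring
end

section
/- Let A : ℝ → gl(n,ℝ) be smooth and define Ω₁(t) = ∫₀ᵗ A(t₁) dt₁ and Ω₂(t) = −(1/2)∫₀ᵗ∫₀^{t₁} [A(t₂), A(t₁)] dt₂ dt₁. Then Y₂(t) := exp(Ω₁(t) + Ω₂(t))·y₀ satisfies Y₂'(t) = A(t)Y₂(t) + O(t³) as t → 0, i.e., the first two terms of the Magnus expansion solve the linear ODE to second order. -/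
open NormedSpace Asymptotics Topology

namespace MagnusAux
open Filter ContDiff


variable {E : Type*} [NormedAddCommGroup E] [NormedSpace ℝ E]

lemma liftO {f f' : ℝ → E} {k : ℕ}
    (hd : ∀ t, HasDerivAt f (f' t) t) (h0 : f 0 = 0)
    (hO : f' =O[𝓝 0] fun t => t ^ k) :
    f =O[𝓝 0] fun t => t ^ (k + 1) := by
  obtain ⟨C, hC⟩ := hO.bound
  rw [Metric.eventually_nhds_iff] at hC
  obtain ⟨δ, hδ, hCb⟩ := hC
  rw [isBigO_iff]
  refine ⟨|C|, Metric.eventually_nhds_iff.mpr ⟨δ, hδ, fun {t} ht => ?_⟩⟩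
  have key : ∀ s ∈ Set.uIcc (0:ℝ) t, ‖f' s‖ ≤ |C| * |t| ^ k := by
    intro s hs
    have hst : |s| ≤ |t| := by
      rcases Set.mem_uIcc.mp hs with ⟨h1, h2⟩ | ⟨h1, h2⟩ <;> rw [abs_le] <;>
        constructor <;> nlinarith [abs_nonneg t, le_abs_self t, neg_abs_le t]
    have hsδ : dist s 0 < δ := by
      simp only [Real.dist_eq, sub_zero] at ht ⊢; exact lt_of_le_of_lt hst ht
    calc ‖f' s‖ ≤ C * ‖s ^ k‖ := hCb hsδ
      _ ≤ |C| * |t| ^ k := by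
          rw [norm_pow, Real.norm_eq_abs]
          gcongr
          exact le_trans (le_abs_self C) (le_refl _)
  have := Convex.norm_image_sub_le_of_norm_hasDerivWithin_le
    (fun s _ => (hd s).hasDerivWithinAt) key (convex_uIcc (0:ℝ) t)
    (Set.left_mem_uIcc) (Set.right_mem_uIcc)
  rw [h0, sub_zero, sub_zero] at this
  calc ‖f t‖ ≤ |C| * |t| ^ k * ‖t‖ := this
    _ = |C| * ‖t ^ (k+1)‖ := by
        rw [norm_pow, Real.norm_eq_abs, pow_succ]; ring

lemma bigO_pow_of_iteratedDeriv_eq_zero {f : ℝ → E} (hf : ContDiff ℝ ∞ f) (k : ℕ)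
    (h : ∀ i ≤ k, iteratedDeriv i f 0 = 0) :
    f =O[𝓝 0] fun t => t ^ (k + 1) := by
  induction k generalizing f with
  | zero =>
    have h0 : f 0 = 0 := by simpa [iteratedDeriv_zero] using h 0 le_rfl
    have := (hf.differentiable (by simp) 0).isBigO_sub
    simpa [h0] using this
  | succ k ih =>
    have hd : ∀ t, HasDerivAt f (deriv f t) t :=
      fun t => (hf.differentiable (by simp) t).hasDerivAt
    have hdf : ContDiff ℝ ∞ (deriv f) := (contDiff_infty_iff_deriv.mp hf).2
    have hder : (deriv f) =O[𝓝 0] fun t => t ^ (k + 1) := by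
      refine ih hdf fun i hi => ?_
      rw [← iteratedDeriv_succ']
      exact h (i + 1) (Nat.succ_le_succ hi)
    exact liftO hd (by simpa [iteratedDeriv_zero] using h 0 (Nat.zero_le _)) hder

lemma eq_zero_of_isBigO_pow {g : ℝ → ℝ} (hg : ContinuousAt g 0) {m : ℕ} (hm : 0 < m)
    (h : g =O[𝓝[≠](0:ℝ)] fun t => t ^ m) : g 0 = 0 := by
  have h1 : Tendsto g (𝓝[≠](0:ℝ)) (𝓝 (g 0)) := hg.tendsto.mono_left nhdsWithin_le_nhds
  have h2 : Tendsto g (𝓝[≠](0:ℝ)) (𝓝 0) := by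
    refine h.trans_tendsto ?_
    have : Tendsto (fun t : ℝ => t ^ m) (𝓝 0) (𝓝 0) := by
      simpa [zero_pow hm.ne'] using (continuous_pow m (M:=ℝ)).tendsto 0
    exact this.mono_left nhdsWithin_le_nhds
  exact tendsto_nhds_unique h1 h2

lemma isBigO_div_step {g : ℝ → ℝ} {m : ℕ}
    (h : (fun t => t * g t) =O[𝓝[≠](0:ℝ)] fun t => t ^ (m + 1)) :
    g =O[𝓝[≠](0:ℝ)] fun t => t ^ m := by
  rw [isBigO_iff] at h ⊢
  obtain ⟨C, hC⟩ := h
  refine ⟨C, ?_⟩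
  have hne : ∀ᶠ t in 𝓝[≠](0:ℝ), t ≠ 0 := eventually_mem_nhdsWithin
  filter_upwards [hC, hne] with t ht htne
  have habs : |t| ≠ 0 := by simpa using htne
  rw [Real.norm_eq_abs, Real.norm_eq_abs, abs_mul, abs_pow] at ht
  rw [Real.norm_eq_abs, Real.norm_eq_abs, abs_pow]
  have h2 : |t| * |g t| ≤ (C * |t| ^ m) * |t| := by
    calc |t| * |g t| ≤ C * |t| ^ (m+1) := ht
      _ = (C * |t| ^ m) * |t| := by ring
  have := (mul_le_mul_iff_of_pos_right (lt_of_le_of_ne (abs_nonneg t) (Ne.symm habs))).mp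
    (by linarith [h2] : |g t| * |t| ≤ (C * |t| ^ m) * |t|)
  linarith

lemma iteratedDeriv_eq_zero_of_isBigO_pow_four {f : ℝ → ℝ} (hf : ContDiff ℝ ∞ f)
    (h : f =O[𝓝 (0:ℝ)] fun t => t ^ 4) : ∀ i ≤ 3, iteratedDeriv i f 0 = 0 := by
  have hdiff : Differentiable ℝ f := hf.differentiable (by simp)
  set f1 := deriv f with hf1def
  have hcf1 : ContDiff ℝ ∞ f1 := (contDiff_infty_iff_deriv.mp hf).2
  set f2 := deriv f1 with hf2def
  have hcf2 : ContDiff ℝ ∞ f2 := (contDiff_infty_iff_deriv.mp hcf1).2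
  set f3 := deriv f2 with hf3def
  have hcf3 : ContDiff ℝ ∞ f3 := (contDiff_infty_iff_deriv.mp hcf2).2
  -- values
  have hf0 : f 0 = 0 := by
    obtain ⟨C, hC⟩ := h.bound
    have := hC.self_of_nhds
    simpa using this
  set d1 := f1 0 with hd1def
  set d2 := f2 0 with hd2def
  set d3 := f3 0 with hd3def
  set p : ℝ → ℝ := fun t => d1 * t + (d2/2 * t^2 + d3/6 * t^3) with hpdef
  have Hp : ∀ t, HasDerivAt p (d1 + (d2 * t + d3/2 * t^2)) t := by
    intro t
    have h1 : HasDerivAt (fun t : ℝ => d1 * t) (d1 * 1) t := (hasDerivAt_id t).const_mul d1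
    have h2 : HasDerivAt (fun t : ℝ => d2/2 * t^2) (d2/2 * (2 * t^1)) t :=
      (hasDerivAt_pow 2 t).const_mul (d2/2)
    have h3 : HasDerivAt (fun t : ℝ => d3/6 * t^3) (d3/6 * (3 * t^2)) t :=
      (hasDerivAt_pow 3 t).const_mul (d3/6)
    convert h1.add (h2.add h3) using 1
    · rfl
    · rfl
    · rfl
    · ring
  set p1 : ℝ → ℝ := fun t => d1 + (d2 * t + d3/2 * t^2) with hp1def
  have Hp1 : ∀ t, HasDerivAt p1 (d2 + d3 * t) t := by
    intro t
    have h1 : HasDerivAt (fun _ : ℝ => d1) 0 t := hasDerivAt_const t d1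
    have h2 : HasDerivAt (fun t : ℝ => d2 * t) (d2 * 1) t := (hasDerivAt_id t).const_mul d2
    have h3 : HasDerivAt (fun t : ℝ => d3/2 * t^2) (d3/2 * (2 * t^1)) t :=
      (hasDerivAt_pow 2 t).const_mul (d3/2)
    convert h1.add (h2.add h3) using 1
    · rfl
    · rfl
    · rfl
    · ring
  set p2 : ℝ → ℝ := fun t => d2 + d3 * t with hp2def
  have Hp2 : ∀ t, HasDerivAt p2 d3 t := by
    intro t
    have h2 : HasDerivAt (fun t : ℝ => d3 * t) (d3 * 1) t := (hasDerivAt_id t).const_mul d3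
    have := (hasDerivAt_const t d2).add h2; simp only [zero_add, mul_one] at this; exact this
  -- φ
  set φ : ℝ → ℝ := fun t => f t - p t with hφdef
  have hcp : ContDiff ℝ ∞ p := by
    apply ContDiff.add
    · exact contDiff_const.mul contDiff_id
    · exact ((contDiff_const.mul (contDiff_id.pow 2))).add
        ((contDiff_const.mul (contDiff_id.pow 3)))
  have hcφ : ContDiff ℝ ∞ φ := hf.sub hcp
  have dφ : deriv φ = fun t => f1 t - p1 t := by
    funext t; exact ((hdiff t).hasDerivAt.sub (Hp t)).deriv
  have dφ1 : deriv (deriv φ) = fun t => f2 t - p2 t := by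
    rw [dφ]; funext t
    exact (((hcf1.differentiable (by simp)) t).hasDerivAt.sub (Hp1 t)).deriv
  have dφ2 : deriv (deriv (deriv φ)) = fun t => f3 t - d3 := by
    rw [dφ1]; funext t
    exact (((hcf2.differentiable (by simp)) t).hasDerivAt.sub (Hp2 t)).deriv
  have hiφ : ∀ i ≤ 3, iteratedDeriv i φ 0 = 0 := by
    intro i hi
    interval_cases i
    · simp [iteratedDeriv_zero, hφdef, hpdef, hf0]
    · simp only [iteratedDeriv_one, dφ, hp1def, hd1def]; simp [hf1def]
    · have : iteratedDeriv 2 φ = deriv (deriv φ) := by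
        rw [show (2:ℕ) = 0 + 1 + 1 by rfl, iteratedDeriv_succ, iteratedDeriv_succ,
          iteratedDeriv_zero]
      rw [this, dφ1]; simp [hp2def, hd2def, hf2def]
    · have : iteratedDeriv 3 φ = deriv (deriv (deriv φ)) := by
        rw [show (3:ℕ) = 0 + 1 + 1 + 1 by rfl, iteratedDeriv_succ, iteratedDeriv_succ,
          iteratedDeriv_succ, iteratedDeriv_zero]
      rw [this, dφ2]; simp [hd3def]
  have hφO : φ =O[𝓝 (0:ℝ)] fun t => t ^ 4 :=
    bigO_pow_of_iteratedDeriv_eq_zero hcφ 3 hiφ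
  have hpO : p =O[𝓝[≠](0:ℝ)] fun t => t ^ 4 := by
    have : p = fun t => f t - φ t := by funext t; simp [hφdef]
    rw [this]
    exact (h.sub hφO).mono nhdsWithin_le_nhds
  -- extraction
  set r1 : ℝ → ℝ := fun t => d1 + (d2/2 * t + d3/6 * t^2) with hr1def
  have hpO' : (fun t => t * r1 t) =O[𝓝[≠](0:ℝ)] fun t => t ^ (3+1) := by
    refine hpO.congr' (by filter_upwards with t; simp only [hpdef, hr1def]; ring) (by rfl)
  have hP1 : r1 =O[𝓝[≠](0:ℝ)] fun t => t ^ 3 := isBigO_div_step hpO'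
  have hd1 : d1 = 0 := by
    have := eq_zero_of_isBigO_pow (g := r1) (by fun_prop) (by norm_num) hP1
    simpa [hr1def] using this
  set r2 : ℝ → ℝ := fun t => d2/2 + d3/6 * t with hr2def
  have hP2 : r2 =O[𝓝[≠](0:ℝ)] fun t => t ^ 2 := by
    refine isBigO_div_step (m := 2)
      (hP1.congr' (by filter_upwards with t; simp only [hr1def, hr2def, hd1]; ring) (by rfl))
  have hd2 : d2 = 0 := by
    have := eq_zero_of_isBigO_pow (g := r2) (by fun_prop) (by norm_num) hP2
    simp only [hr2def] at this; linarith
  have hP3 : (fun _ : ℝ => d3/6) =O[𝓝[≠](0:ℝ)] fun t => t ^ 1 := by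
    refine isBigO_div_step (m := 1)
      (hP2.congr' (by filter_upwards with t; simp only [hr2def, hd2]; ring) (by rfl))
  have hd3 : d3 = 0 := by
    have := eq_zero_of_isBigO_pow (g := fun _ : ℝ => d3/6) (by fun_prop) (by norm_num) hP3
    linarith
  -- conclude
  intro i hi
  interval_cases i
  · simpa using hf0
  · simpa [iteratedDeriv_one] using hd1
  · rw [show (2:ℕ) = 0 + 1 + 1 by rfl, iteratedDeriv_succ, iteratedDeriv_succ,
      iteratedDeriv_zero]
    exact hd2
  · rw [show (3:ℕ) = 0 + 1 + 1 + 1 by rfl, iteratedDeriv_succ, iteratedDeriv_succ,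
      iteratedDeriv_succ, iteratedDeriv_zero]
    exact hd3


lemma exp_tail_bound {𝔸 : Type*} [NormedRing 𝔸] [NormedAlgebra ℝ 𝔸] [CompleteSpace 𝔸]
    (X : 𝔸) (hX : ‖X‖ ≤ 1) :
    ‖exp X - (1 + X + (1/2:ℝ) • (X*X) + (1/6:ℝ) • (X*X*X))‖ ≤ 3 * ‖X‖^4 := by
  have hsum : Summable fun n : ℕ => ((n.factorial : ℝ)⁻¹) • X ^ n := expSeries_summable' (𝕂 := ℝ) X
  have hexp : exp X = ∑' n : ℕ, ((n.factorial : ℝ)⁻¹) • X ^ n := by rw [exp_eq_tsum ℝ]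
  have hsplit := Summable.sum_add_tsum_nat_add (f := fun n : ℕ => ((n.factorial : ℝ)⁻¹) • X ^ n) 4 hsum
  have hpoly : (∑ i ∈ Finset.range 4, ((i.factorial : ℝ)⁻¹) • X ^ i)
      = 1 + X + (1/2:ℝ) • (X*X) + (1/6:ℝ) • (X*X*X) := by
    rw [Finset.sum_range_succ, Finset.sum_range_succ, Finset.sum_range_succ,
      Finset.sum_range_one]
    norm_num [Nat.factorial, pow_succ]
  have key : exp X - (1 + X + (1/2:ℝ) • (X*X) + (1/6:ℝ) • (X*X*X))
      = ∑' n : ℕ, (((n+4).factorial : ℝ)⁻¹) • X ^ (n+4) := by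
    rw [hexp, ← hsplit, hpoly, add_sub_cancel_left]
  rw [key]
  have hsum4 : Summable fun n : ℕ => ‖(((n+4).factorial : ℝ)⁻¹) • X ^ (n+4)‖ := by
    have := norm_expSeries_summable' (𝕂 := ℝ) X
    exact (summable_nat_add_iff 4).mpr this
  have hbound : ∀ n : ℕ, ‖(((n+4).factorial : ℝ)⁻¹) • X ^ (n+4)‖
      ≤ ‖X‖^4 * ((n.factorial : ℝ)⁻¹) := by
    intro n
    rw [norm_smul]
    have h1 : ‖X ^ (n+4)‖ ≤ ‖X‖ ^ (n+4) := norm_pow_le' X (by omega)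
    have h2 : ‖X‖ ^ (n+4) ≤ ‖X‖ ^ 4 := by
      apply pow_le_pow_of_le_one (norm_nonneg X) hX; omega
    have h3 : (((n+4).factorial : ℝ)⁻¹) ≤ ((n.factorial : ℝ)⁻¹) := by
      apply inv_anti₀
      · exact_mod_cast Nat.cast_pos.mpr n.factorial_pos
      · exact_mod_cast Nat.factorial_le (by omega)
    calc ‖(((n+4).factorial : ℝ)⁻¹)‖ * ‖X ^ (n+4)‖
        ≤ (((n+4).factorial : ℝ)⁻¹) * ‖X‖^4 := by
          rw [Real.norm_eq_abs, abs_of_nonneg (by positivity)]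
          exact mul_le_mul_of_nonneg_left (h1.trans h2) (by positivity)
      _ ≤ ((n.factorial : ℝ)⁻¹) * ‖X‖^4 := by
          exact mul_le_mul_of_nonneg_right h3 (by positivity)
      _ = ‖X‖^4 * ((n.factorial : ℝ)⁻¹) := by ring
  have hfac : Summable fun n : ℕ => ((n.factorial : ℝ)⁻¹) := by
    simpa [one_div] using Real.summable_pow_div_factorial 1
  have hsumr : Summable fun n : ℕ => ‖X‖^4 * ((n.factorial : ℝ)⁻¹) := hfac.mul_left _
  calc ‖∑' n : ℕ, (((n+4).factorial : ℝ)⁻¹) • X ^ (n+4)‖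
      ≤ ∑' n : ℕ, ‖(((n+4).factorial : ℝ)⁻¹) • X ^ (n+4)‖ := norm_tsum_le_tsum_norm hsum4
    _ ≤ ∑' n : ℕ, ‖X‖^4 * ((n.factorial : ℝ)⁻¹) := Summable.tsum_le_tsum hbound hsum4 hsumr
    _ = ‖X‖^4 * ∑' n : ℕ, ((n.factorial : ℝ)⁻¹) := tsum_mul_left
    _ ≤ ‖X‖^4 * 3 := by
        apply mul_le_mul_of_nonneg_left _ (by positivity)
        have : ∑' n : ℕ, ((n.factorial : ℝ)⁻¹) = Real.exp 1 := by
          rw [Real.exp_eq_exp_ℝ, exp_eq_tsum ℝ]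
          simp
        rw [this]
        linarith [Real.exp_one_lt_d9]
    _ = 3 * ‖X‖^4 := by ring
variable {n : ℕ}

section Mat
attribute [local instance] Matrix.linftyOpNormedRing Matrix.linftyOpNormedAlgebra

/-- entry evaluation as a CLM -/
noncomputable def entryCLM (i j : Fin n) : Matrix (Fin n) (Fin n) ℝ →L[ℝ] ℝ :=
  LinearMap.toContinuousLinearMap
    { toFun := fun m => m i j, map_add' := fun _ _ => rfl, map_smul' := fun _ _ => rfl }

@[simp] lemma entryCLM_apply (i j : Fin n) (m : Matrix (Fin n) (Fin n) ℝ) :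
    entryCLM i j m = m i j := rfl

lemma matContDiff {f : ℝ → Matrix (Fin n) (Fin n) ℝ}
    (hf : ∀ i j, ContDiff ℝ ∞ fun t => f t i j) : ContDiff ℝ ∞ f := by
  have : f = fun t => ∑ i, ∑ j, Matrix.single i j (f t i j) := by
    funext t; exact Matrix.matrix_eq_sum_single (f t)
  rw [this]
  refine ContDiff.sum fun i _ => ContDiff.sum fun j _ => ?_
  have : (fun t => Matrix.single i j (f t i j))
      = fun t => (f t i j) • Matrix.single i j (1:ℝ) := by
    funext t; rw [Matrix.smul_single, smul_eq_mul, mul_one]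
  rw [this]
  exact (hf i j).smul contDiff_const

lemma matHasDerivAt {f : ℝ → Matrix (Fin n) (Fin n) ℝ} {f' : Matrix (Fin n) (Fin n) ℝ} {t : ℝ}
    (hf : ∀ i j, HasDerivAt (fun s => f s i j) (f' i j) t) : HasDerivAt f f' t := by
  have h1 : f = fun s => ∑ i, ∑ j, Matrix.single i j (f s i j) := by
    funext s; exact Matrix.matrix_eq_sum_single (f s)
  have h2 : f' = ∑ i, ∑ j, Matrix.single i j (f' i j) :=
    Matrix.matrix_eq_sum_single f'
  rw [h1, h2]
  refine HasDerivAt.fun_sum fun i _ => HasDerivAt.fun_sum fun j _ => ?_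
  have e : ∀ (g : ℝ) , True := fun _ => trivial
  have : (fun s => Matrix.single i j (f s i j))
      = fun s => (f s i j) • Matrix.single i j (1:ℝ) := by
    funext s; rw [Matrix.smul_single, smul_eq_mul, mul_one]
  rw [this, show Matrix.single i j (f' i j)
      = (f' i j) • Matrix.single i j (1:ℝ) by
    rw [Matrix.smul_single, smul_eq_mul, mul_one]]
  exact (hf i j).smul_const _

end Mat

lemma bigO_cubed_of_derivs {E : Type*} [NormedAddCommGroup E] [NormedSpace ℝ E]
    {f f1 f2 : ℝ → E}
    (hf : ∀ t, HasDerivAt f (f1 t) t) (hf1 : ∀ t, HasDerivAt f1 (f2 t) t)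
    (hf2 : DifferentiableAt ℝ f2 0)
    (h0 : f 0 = 0) (h1 : f1 0 = 0) (h2 : f2 0 = 0) : f =O[𝓝 0] fun t => t ^ 3 := by
  have e2 : f2 =O[𝓝 (0:ℝ)] fun t => t ^ 1 := by
    have := hf2.isBigO_sub
    simpa [h2] using this
  have e1 : f1 =O[𝓝 (0:ℝ)] fun t => t ^ 2 := liftO hf1 h1 e2
  exact liftO hf h0 e1

lemma pow_isBigO_pow_nhds_zero {k m : ℕ} (h : k ≤ m) :
    (fun t : ℝ => t ^ m) =O[𝓝 0] fun t => t ^ k := by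
  rw [isBigO_iff]
  refine ⟨1, ?_⟩
  have : ∀ᶠ t : ℝ in 𝓝 0, |t| ≤ 1 := by
    have := Metric.ball_mem_nhds (0:ℝ) one_pos
    filter_upwards [this] with t ht
    rw [Metric.mem_ball, Real.dist_eq, sub_zero] at ht
    exact le_of_lt ht
  filter_upwards [this] with t ht
  rw [Real.norm_eq_abs, Real.norm_eq_abs, abs_pow, abs_pow, one_mul]
  exact pow_le_pow_of_le_one (abs_nonneg t) ht h

end MagnusAux
open MagnusAux Filter ContDiff MeasureTheory intervalIntegral

set_option maxHeartbeats 1000000 in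
/-- For smooth `A : ℝ → gl(n,ℝ)`, set
`Ω₁(t) = ∫₀ᵗ A(t₁) dt₁` and
`Ω₂(t) = −(1/2) ∫₀ᵗ ∫₀^{t₁} [A(t₂), A(t₁)] dt₂ dt₁`.  Then
`Y₂(t) := exp(Ω₁(t) + Ω₂(t)) · y₀` satisfies `Y₂'(t) = A(t) Y₂(t) + O(t³)`
as `t → 0`, entrywise. -/
theorem magnus_two_terms_second_order {n : ℕ}
    (A : ℝ → Matrix (Fin n) (Fin n) ℝ)
    (hA : ∀ i j : Fin n, ContDiff ℝ (⊤ : ℕ∞) (fun t => A t i j))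
    (y₀ : Matrix (Fin n) (Fin n) ℝ)
    (Ω₁ Ω₂ Y₂ : ℝ → Matrix (Fin n) (Fin n) ℝ)
    (hΩ₁ : ∀ t : ℝ, Ω₁ t = Matrix.of fun i j => ∫ s in (0:ℝ)..t, A s i j)
    (hΩ₂ : ∀ t : ℝ, Ω₂ t = Matrix.of fun i j =>
      -(1/2 : ℝ) * ∫ t₁ in (0:ℝ)..t, ∫ t₂ in (0:ℝ)..t₁,
        (A t₂ * A t₁ - A t₁ * A t₂) i j)
    (hY₂ : ∀ t : ℝ, Y₂ t = exp (Ω₁ t + Ω₂ t) * y₀) :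
    ∀ i j : Fin n,
      (fun t : ℝ => deriv (fun s => Y₂ s i j) t - (A t * Y₂ t) i j)
        =O[𝓝 0] (fun t : ℝ => t ^ 3) := by
  letI : SeminormedRing (Matrix (Fin n) (Fin n) ℝ) := Matrix.linftyOpSemiNormedRing
  letI : NormedRing (Matrix (Fin n) (Fin n) ℝ) := Matrix.linftyOpNormedRing
  letI : NormedAlgebra ℝ (Matrix (Fin n) (Fin n) ℝ) := Matrix.linftyOpNormedAlgebra
  -- smoothness of A and its derivatives
  have hAc : ContDiff ℝ ∞ A := matContDiff fun i j => (hA i j).of_le (by simp)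
  have hAd : ∀ t, HasDerivAt A (deriv A t) t := fun t =>
    (hAc.differentiable (by simp) t).hasDerivAt
  have hAdc : ContDiff ℝ ∞ (deriv A) := (contDiff_infty_iff_deriv.mp hAc).2
  have hAdd : ∀ t, HasDerivAt (deriv A) (deriv (deriv A) t) t := fun t =>
    (hAdc.differentiable (by simp) t).hasDerivAt
  -- Ω₁ : FTC
  have hΩ₁e : ∀ (i j : Fin n) (t : ℝ), HasDerivAt (fun s => Ω₁ s i j) (A t i j) t := by
    intro i j t
    have hcont : Continuous fun s => A s i j := (hA i j).continuous
    have h0 := (hcont.integral_hasStrictDerivAt 0 t).hasDerivAt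
    have hfun : (fun u => ∫ s in (0:ℝ)..u, A s i j) = fun s => Ω₁ s i j := by
      funext u; rw [hΩ₁ u]; rfl
    rwa [hfun] at h0
  have HΩ₁ : ∀ t, HasDerivAt Ω₁ (A t) t := fun t => matHasDerivAt fun i j => hΩ₁e i j t
  have hΩ₁c : ContDiff ℝ ∞ Ω₁ := by
    refine matContDiff fun i j => ?_
    rw [contDiff_infty_iff_deriv]
    refine ⟨fun t => (hΩ₁e i j t).differentiableAt, ?_⟩
    have : deriv (fun s => Ω₁ s i j) = fun t => A t i j := funext fun t => (hΩ₁e i j t).deriv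
    rw [this]; exact (hA i j).of_le (by simp)
  have hΩ₁0 : Ω₁ 0 = 0 := by
    rw [hΩ₁ 0]; ext i j; simp
  -- inner integral identity
  have hinner : ∀ (i j : Fin n) (t₁ : ℝ),
      (∫ t₂ in (0:ℝ)..t₁, (A t₂ * A t₁ - A t₁ * A t₂) i j)
        = (Ω₁ t₁ * A t₁ - A t₁ * Ω₁ t₁) i j := by
    intro i j t₁
    have int1 : ∀ k : Fin n, IntervalIntegrable (fun t₂ => A t₂ i k * A t₁ k j) volume 0 t₁ :=
      fun k => ((hA i k).continuous.mul continuous_const).intervalIntegrable _ _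
    have int2 : ∀ k : Fin n, IntervalIntegrable (fun t₂ => A t₁ i k * A t₂ k j) volume 0 t₁ :=
      fun k => (continuous_const.mul (hA k j).continuous).intervalIntegrable _ _
    have step1 : (∫ t₂ in (0:ℝ)..t₁, (A t₂ * A t₁ - A t₁ * A t₂) i j)
        = ∫ t₂ in (0:ℝ)..t₁, ((∑ k, A t₂ i k * A t₁ k j) - ∑ k, A t₁ i k * A t₂ k j) := by
      apply integral_congr
      intro s _
      simp [Matrix.sub_apply, Matrix.mul_apply]
    rw [step1]
    have int1s : IntervalIntegrable (fun t₂ => ∑ k, A t₂ i k * A t₁ k j) volume 0 t₁ :=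
      (continuous_finset_sum _ fun k _ =>
        ((hA i k).continuous.mul continuous_const)).intervalIntegrable _ _
    have int2s : IntervalIntegrable (fun t₂ => ∑ k, A t₁ i k * A t₂ k j) volume 0 t₁ :=
      (continuous_finset_sum _ fun k _ =>
        (continuous_const.mul (hA k j).continuous)).intervalIntegrable _ _
    rw [integral_sub int1s int2s]
    rw [integral_finset_sum (fun k _ => int1 k), integral_finset_sum (fun k _ => int2 k)]
    simp only [intervalIntegral.integral_mul_const, intervalIntegral.integral_const_mul]
    simp only [Matrix.sub_apply, Matrix.mul_apply, hΩ₁ t₁, Matrix.of_apply]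
  -- Ω₂
  have hψc : ∀ i j : Fin n, Continuous fun t₁ => (Ω₁ t₁ * A t₁ - A t₁ * Ω₁ t₁) i j := by
    intro i j
    exact (entryCLM i j).continuous.comp ((hΩ₁c.continuous.mul hAc.continuous).sub
      (hAc.continuous.mul hΩ₁c.continuous))
  have hΩ₂e : ∀ (i j : Fin n) (t : ℝ), HasDerivAt (fun s => Ω₂ s i j)
      (((-(1/2:ℝ)) • (Ω₁ t * A t - A t * Ω₁ t)) i j) t := by
    intro i j t
    have hFTC := (((hψc i j).integral_hasStrictDerivAt 0 t).hasDerivAt).const_mul (-(1/2:ℝ))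
    have hfun : (fun u => -(1/2:ℝ) * ∫ t₁ in (0:ℝ)..u, (Ω₁ t₁ * A t₁ - A t₁ * Ω₁ t₁) i j)
        = fun s => Ω₂ s i j := by
      funext u
      rw [hΩ₂ u, Matrix.of_apply]
      congr 1
      exact (integral_congr fun t₁ _ => (hinner i j t₁).symm)
    rw [show ((-(1/2:ℝ)) • (Ω₁ t * A t - A t * Ω₁ t)) i j
        = -(1/2:ℝ) * (Ω₁ t * A t - A t * Ω₁ t) i j from rfl]
    rw [← hfun]
    exact hFTC
  have HΩ₂ : ∀ t, HasDerivAt Ω₂ ((-(1/2:ℝ)) • (Ω₁ t * A t - A t * Ω₁ t)) t := fun t =>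
    matHasDerivAt fun i j => hΩ₂e i j t
  have hΩ₂c : ContDiff ℝ ∞ Ω₂ := by
    refine matContDiff fun i j => ?_
    rw [contDiff_infty_iff_deriv]
    refine ⟨fun t => (hΩ₂e i j t).differentiableAt, ?_⟩
    have : deriv (fun s => Ω₂ s i j)
        = fun t => ((-(1/2:ℝ)) • (Ω₁ t * A t - A t * Ω₁ t)) i j :=
      funext fun t => (hΩ₂e i j t).deriv
    rw [this]
    exact (entryCLM i j).contDiff.comp
      (((hΩ₁c.mul hAc).sub (hAc.mul hΩ₁c)).const_smul (-(1/2:ℝ)))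
  have hΩ₂0 : Ω₂ 0 = 0 := by
    rw [hΩ₂ 0]; ext i j; simp
  -- derivative edifice
  have Hw := fun t : ℝ =>
    ((((HΩ₁ t).mul (hAd t)).sub ((hAd t).mul (HΩ₁ t))).const_smul (-(1/2:ℝ)))
  have HW := fun t : ℝ => (HΩ₁ t).add (HΩ₂ t)
  have HU := fun t : ℝ => (hAd t).add (Hw t)
  have Hw1 := fun t : ℝ =>
    (((((hAd t).mul (hAd t)).add ((HΩ₁ t).mul (hAdd t))).sub
      (((hAdd t).mul (HΩ₁ t)).add ((hAd t).mul (hAd t)))).const_smul (-(1/2:ℝ)))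
  have HU1 := fun t : ℝ => (hAdd t).add (Hw1 t)
  have HQ := fun t : ℝ =>
    (((HW t).const_add 1).add (((HW t).mul (HW t)).const_smul (1/2:ℝ))).add
      ((((HW t).mul (HW t)).mul (HW t)).const_smul (1/6:ℝ))
  have HQ1 := fun t : ℝ =>
    ((HU t).add ((((HU t).mul (HW t)).add ((HW t).mul (HU t))).const_smul (1/2:ℝ))).add
      ((((((HU t).mul (HW t)).add ((HW t).mul (HU t))).mul (HW t)).add
        (((HW t).mul (HW t)).mul (HU t))).const_smul (1/6:ℝ))
  have HQ2 := fun t : ℝ =>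
    ((HU1 t).add ((((((HU1 t).mul (HW t)).add ((HU t).mul (HU t))).add
        (((HU t).mul (HU t)).add ((HW t).mul (HU1 t))))).const_smul (1/2:ℝ))).add
      ((((((((HU1 t).mul (HW t)).add ((HU t).mul (HU t))).add
            (((HU t).mul (HU t)).add ((HW t).mul (HU1 t)))).mul (HW t)).add
          ((((HU t).mul (HW t)).add ((HW t).mul (HU t))).mul (HU t))).add
        (((((HU t).mul (HW t)).add ((HW t).mul (HU t))).mul (HU t)).add
          (((HW t).mul (HW t)).mul (HU1 t)))).const_smul (1/6:ℝ))
  -- the polynomial part is O(t^3)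
  have hGO : (fun y => (A y + (-(1/2:ℝ)) • (Ω₁ y * A y - A y * Ω₁ y))
      + (1/2:ℝ) • ((A y + (-(1/2:ℝ)) • (Ω₁ y * A y - A y * Ω₁ y)) * (Ω₁ y + Ω₂ y)
          + (Ω₁ y + Ω₂ y) * (A y + (-(1/2:ℝ)) • (Ω₁ y * A y - A y * Ω₁ y)))
      + (1/6:ℝ) • (((A y + (-(1/2:ℝ)) • (Ω₁ y * A y - A y * Ω₁ y)) * (Ω₁ y + Ω₂ y)
            + (Ω₁ y + Ω₂ y) * (A y + (-(1/2:ℝ)) • (Ω₁ y * A y - A y * Ω₁ y))) * (Ω₁ y + Ω₂ y)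
          + (Ω₁ y + Ω₂ y) * (Ω₁ y + Ω₂ y) * (A y + (-(1/2:ℝ)) • (Ω₁ y * A y - A y * Ω₁ y)))
      - A y * (1 + (Ω₁ y + Ω₂ y) + (1/2:ℝ) • ((Ω₁ y + Ω₂ y) * (Ω₁ y + Ω₂ y))
          + (1/6:ℝ) • ((Ω₁ y + Ω₂ y) * (Ω₁ y + Ω₂ y) * (Ω₁ y + Ω₂ y))))
      =O[𝓝 (0:ℝ)] fun t => t ^ 3 := by
    apply MagnusAux.bigO_cubed_of_derivs
      (fun t => (HQ1 t).sub ((hAd t).mul (HQ t)))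
      (fun t => (HQ2 t).sub (((hAdd t).mul (HQ t)).add ((hAd t).mul (HQ1 t))))
    · have d1 : Differentiable ℝ A := hAc.differentiable (by simp)
      have d2 : Differentiable ℝ (deriv A) := hAdc.differentiable (by simp)
      have d3 : Differentiable ℝ Ω₁ := hΩ₁c.differentiable (by simp)
      have d4 : Differentiable ℝ Ω₂ := hΩ₂c.differentiable (by simp)
      have d5 : Differentiable ℝ (deriv (deriv A)) :=
        ((contDiff_infty_iff_deriv.mp hAdc).2).differentiable (by simp)
      fun_prop
    · simp [hΩ₁0, hΩ₂0]
    · simp only [hΩ₁0, hΩ₂0]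
      simp [smul_add, smul_sub, mul_add, add_mul, mul_smul_comm, smul_mul_assoc, mul_assoc,
        Pi.add_apply, Pi.mul_apply, Pi.smul_apply, Pi.sub_apply, hΩ₁0, hΩ₂0]
      module
    · simp only [hΩ₁0, hΩ₂0]
      simp [smul_add, smul_sub, mul_add, add_mul, mul_smul_comm, smul_mul_assoc, mul_assoc,
        Pi.add_apply, Pi.mul_apply, Pi.smul_apply, Pi.sub_apply, hΩ₁0, hΩ₂0]
      module
  -- exp, remainder H
  have hexpc : ContDiff ℝ ∞ (exp : Matrix (Fin n) (Fin n) ℝ → Matrix (Fin n) (Fin n) ℝ) :=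
    contDiff_iff_contDiffAt.mpr fun x => (exp_analytic x).contDiffAt
  have hWc : ContDiff ℝ ∞ (fun y => Ω₁ y + Ω₂ y) := hΩ₁c.add hΩ₂c
  have hQc : ContDiff ℝ ∞ (fun y => 1 + (Ω₁ y + Ω₂ y)
      + (1/2:ℝ) • ((Ω₁ y + Ω₂ y) * (Ω₁ y + Ω₂ y))
      + (1/6:ℝ) • ((Ω₁ y + Ω₂ y) * (Ω₁ y + Ω₂ y) * (Ω₁ y + Ω₂ y))) := by
    exact ((contDiff_const.add hWc).add ((hWc.mul hWc).const_smul (1/2:ℝ))).add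
      (((hWc.mul hWc).mul hWc).const_smul (1/6:ℝ))
  have hHc : ContDiff ℝ ∞ (fun y => exp (Ω₁ y + Ω₂ y) - (1 + (Ω₁ y + Ω₂ y)
      + (1/2:ℝ) • ((Ω₁ y + Ω₂ y) * (Ω₁ y + Ω₂ y))
      + (1/6:ℝ) • ((Ω₁ y + Ω₂ y) * (Ω₁ y + Ω₂ y) * (Ω₁ y + Ω₂ y)))) :=
    (hexpc.comp hWc).sub hQc
  have hHd : ∀ t, HasDerivAt (fun y => exp (Ω₁ y + Ω₂ y) - (1 + (Ω₁ y + Ω₂ y)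
      + (1/2:ℝ) • ((Ω₁ y + Ω₂ y) * (Ω₁ y + Ω₂ y))
      + (1/6:ℝ) • ((Ω₁ y + Ω₂ y) * (Ω₁ y + Ω₂ y) * (Ω₁ y + Ω₂ y))))
      (deriv (fun y => exp (Ω₁ y + Ω₂ y) - (1 + (Ω₁ y + Ω₂ y)
      + (1/2:ℝ) • ((Ω₁ y + Ω₂ y) * (Ω₁ y + Ω₂ y))
      + (1/6:ℝ) • ((Ω₁ y + Ω₂ y) * (Ω₁ y + Ω₂ y) * (Ω₁ y + Ω₂ y)))) t) t := fun t =>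
    (hHc.differentiable (by simp) t).hasDerivAt
  -- H = O(t^4)
  have hWO : (fun t => Ω₁ t + Ω₂ t) =O[𝓝 (0:ℝ)] fun t => t := by
    have := (HW 0).differentiableAt.isBigO_sub
    simpa [hΩ₁0, hΩ₂0] using this
  have hWtend : Filter.Tendsto (fun t => Ω₁ t + Ω₂ t) (𝓝 0) (𝓝 0) := by
    have := hWc.continuous.tendsto 0
    simp only [hΩ₁0, hΩ₂0, add_zero] at this; exact this
  have hWsmall : ∀ᶠ t in 𝓝 (0:ℝ), ‖Ω₁ t + Ω₂ t‖ ≤ 1 := by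
    have := NormedAddCommGroup.tendsto_nhds_zero.mp hWtend 1 one_pos
    filter_upwards [this] with t ht using le_of_lt ht
  have hHO4 : (fun y => exp (Ω₁ y + Ω₂ y) - (1 + (Ω₁ y + Ω₂ y)
      + (1/2:ℝ) • ((Ω₁ y + Ω₂ y) * (Ω₁ y + Ω₂ y))
      + (1/6:ℝ) • ((Ω₁ y + Ω₂ y) * (Ω₁ y + Ω₂ y) * (Ω₁ y + Ω₂ y))))
      =O[𝓝 (0:ℝ)] fun t => t ^ 4 := by
    have step1 : (fun y => exp (Ω₁ y + Ω₂ y) - (1 + (Ω₁ y + Ω₂ y)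
        + (1/2:ℝ) • ((Ω₁ y + Ω₂ y) * (Ω₁ y + Ω₂ y))
        + (1/6:ℝ) • ((Ω₁ y + Ω₂ y) * (Ω₁ y + Ω₂ y) * (Ω₁ y + Ω₂ y))))
        =O[𝓝 (0:ℝ)] (fun t => ‖Ω₁ t + Ω₂ t‖ ^ 4) := by
      rw [isBigO_iff]
      refine ⟨3, ?_⟩
      filter_upwards [hWsmall] with t ht
      have := MagnusAux.exp_tail_bound (Ω₁ t + Ω₂ t) ht
      calc ‖exp (Ω₁ t + Ω₂ t) - (1 + (Ω₁ t + Ω₂ t)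
            + (1/2:ℝ) • ((Ω₁ t + Ω₂ t) * (Ω₁ t + Ω₂ t))
            + (1/6:ℝ) • ((Ω₁ t + Ω₂ t) * (Ω₁ t + Ω₂ t) * (Ω₁ t + Ω₂ t)))‖
          ≤ 3 * ‖Ω₁ t + Ω₂ t‖ ^ 4 := this
        _ = 3 * ‖‖Ω₁ t + Ω₂ t‖ ^ 4‖ := by
            rw [Real.norm_eq_abs, abs_of_nonneg (by positivity)]
    have step2 : (fun t => ‖Ω₁ t + Ω₂ t‖ ^ 4) =O[𝓝 (0:ℝ)] fun t => t ^ 4 :=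
      hWO.norm_left.pow 4
    exact step1.trans step2
  -- entries of deriv H are O(t^3), and entries of A * H are O(t^3)
  have hHdO : ∀ k l : Fin n, (fun t => (deriv (fun y => exp (Ω₁ y + Ω₂ y) - (1 + (Ω₁ y + Ω₂ y)
      + (1/2:ℝ) • ((Ω₁ y + Ω₂ y) * (Ω₁ y + Ω₂ y))
      + (1/6:ℝ) • ((Ω₁ y + Ω₂ y) * (Ω₁ y + Ω₂ y) * (Ω₁ y + Ω₂ y)))) t) k l)
      =O[𝓝 (0:ℝ)] fun t => t ^ 3 := by
    intro k l
    have ψc : ContDiff ℝ ∞ (fun t => (exp (Ω₁ t + Ω₂ t) - (1 + (Ω₁ t + Ω₂ t)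
        + (1/2:ℝ) • ((Ω₁ t + Ω₂ t) * (Ω₁ t + Ω₂ t))
        + (1/6:ℝ) • ((Ω₁ t + Ω₂ t) * (Ω₁ t + Ω₂ t) * (Ω₁ t + Ω₂ t)))) k l) :=
      (entryCLM k l).contDiff.comp hHc
    have ψO4 : (fun t => (exp (Ω₁ t + Ω₂ t) - (1 + (Ω₁ t + Ω₂ t)
        + (1/2:ℝ) • ((Ω₁ t + Ω₂ t) * (Ω₁ t + Ω₂ t))
        + (1/6:ℝ) • ((Ω₁ t + Ω₂ t) * (Ω₁ t + Ω₂ t) * (Ω₁ t + Ω₂ t)))) k l)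
        =O[𝓝 (0:ℝ)] fun t => t ^ 4 := ((entryCLM k l).isBigO_comp _ _).trans hHO4
    have hiψ := MagnusAux.iteratedDeriv_eq_zero_of_isBigO_pow_four ψc ψO4
    have eψ : deriv (fun t => (exp (Ω₁ t + Ω₂ t) - (1 + (Ω₁ t + Ω₂ t)
        + (1/2:ℝ) • ((Ω₁ t + Ω₂ t) * (Ω₁ t + Ω₂ t))
        + (1/6:ℝ) • ((Ω₁ t + Ω₂ t) * (Ω₁ t + Ω₂ t) * (Ω₁ t + Ω₂ t)))) k l)
        = fun t => (deriv (fun y => exp (Ω₁ y + Ω₂ y) - (1 + (Ω₁ y + Ω₂ y)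
        + (1/2:ℝ) • ((Ω₁ y + Ω₂ y) * (Ω₁ y + Ω₂ y))
        + (1/6:ℝ) • ((Ω₁ y + Ω₂ y) * (Ω₁ y + Ω₂ y) * (Ω₁ y + Ω₂ y)))) t) k l :=
      funext fun t => ((entryCLM k l).hasFDerivAt.comp_hasDerivAt t (hHd t)).deriv
    have hc1 : ContDiff ℝ ∞ (deriv (fun t => (exp (Ω₁ t + Ω₂ t) - (1 + (Ω₁ t + Ω₂ t)
        + (1/2:ℝ) • ((Ω₁ t + Ω₂ t) * (Ω₁ t + Ω₂ t))
        + (1/6:ℝ) • ((Ω₁ t + Ω₂ t) * (Ω₁ t + Ω₂ t) * (Ω₁ t + Ω₂ t)))) k l)) :=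
      (contDiff_infty_iff_deriv.mp ψc).2
    have := MagnusAux.bigO_pow_of_iteratedDeriv_eq_zero hc1 2 (fun i hi => by
      rw [← iteratedDeriv_succ']
      exact hiψ (i+1) (by omega))
    rw [eψ] at this
    exact this
  have hAHO : ∀ k l : Fin n, (fun t => (A t * (exp (Ω₁ t + Ω₂ t) - (1 + (Ω₁ t + Ω₂ t)
      + (1/2:ℝ) • ((Ω₁ t + Ω₂ t) * (Ω₁ t + Ω₂ t))
      + (1/6:ℝ) • ((Ω₁ t + Ω₂ t) * (Ω₁ t + Ω₂ t) * (Ω₁ t + Ω₂ t)))) ) k l)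
      =O[𝓝 (0:ℝ)] fun t => t ^ 3 := by
    intro k l
    have : (fun t => (A t * (exp (Ω₁ t + Ω₂ t) - (1 + (Ω₁ t + Ω₂ t)
        + (1/2:ℝ) • ((Ω₁ t + Ω₂ t) * (Ω₁ t + Ω₂ t))
        + (1/6:ℝ) • ((Ω₁ t + Ω₂ t) * (Ω₁ t + Ω₂ t) * (Ω₁ t + Ω₂ t)))) ) k l)
        = fun t => ∑ m, A t k m * (exp (Ω₁ t + Ω₂ t) - (1 + (Ω₁ t + Ω₂ t)
        + (1/2:ℝ) • ((Ω₁ t + Ω₂ t) * (Ω₁ t + Ω₂ t))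
        + (1/6:ℝ) • ((Ω₁ t + Ω₂ t) * (Ω₁ t + Ω₂ t) * (Ω₁ t + Ω₂ t)))) m l := by
      funext t; rw [Matrix.mul_apply]
    rw [this]
    refine Asymptotics.IsBigO.fun_sum fun m _ => ?_
    have hA1 : (fun t => A t k m) =O[𝓝 (0:ℝ)] (fun _ => (1:ℝ)) :=
      ((hA k m).continuous.tendsto 0).isBigO_one ℝ
    have hH4 : (fun t => (exp (Ω₁ t + Ω₂ t) - (1 + (Ω₁ t + Ω₂ t)
        + (1/2:ℝ) • ((Ω₁ t + Ω₂ t) * (Ω₁ t + Ω₂ t))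
        + (1/6:ℝ) • ((Ω₁ t + Ω₂ t) * (Ω₁ t + Ω₂ t) * (Ω₁ t + Ω₂ t)))) m l)
        =O[𝓝 (0:ℝ)] fun t => t ^ 4 := ((entryCLM m l).isBigO_comp _ _).trans hHO4
    have := (hA1.mul hH4).trans (by
      have : (fun t : ℝ => 1 * t ^ 4) = fun t : ℝ => t ^ 4 := by funext t; ring
      rw [this]
      exact MagnusAux.pow_isBigO_pow_nhds_zero (k:=3) (m:=4) (by norm_num))
    exact this
  -- entries of F := deriv g - A * g are O(t^3)
  have hFO : ∀ k l : Fin n, (fun t => (deriv (fun y => exp (Ω₁ y + Ω₂ y)) t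
      - A t * exp (Ω₁ t + Ω₂ t)) k l) =O[𝓝 (0:ℝ)] fun t => t ^ 3 := by
    intro k l
    have hgsplit : ∀ t, HasDerivAt (fun y => exp (Ω₁ y + Ω₂ y))
        ((deriv (fun y => exp (Ω₁ y + Ω₂ y) - (1 + (Ω₁ y + Ω₂ y)
        + (1/2:ℝ) • ((Ω₁ y + Ω₂ y) * (Ω₁ y + Ω₂ y))
        + (1/6:ℝ) • ((Ω₁ y + Ω₂ y) * (Ω₁ y + Ω₂ y) * (Ω₁ y + Ω₂ y)))) t)
        + ((A t + (-(1/2:ℝ)) • (Ω₁ t * A t - A t * Ω₁ t))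
      + (1/2:ℝ) • ((A t + (-(1/2:ℝ)) • (Ω₁ t * A t - A t * Ω₁ t)) * (Ω₁ t + Ω₂ t)
          + (Ω₁ t + Ω₂ t) * (A t + (-(1/2:ℝ)) • (Ω₁ t * A t - A t * Ω₁ t)))
      + (1/6:ℝ) • (((A t + (-(1/2:ℝ)) • (Ω₁ t * A t - A t * Ω₁ t)) * (Ω₁ t + Ω₂ t)
            + (Ω₁ t + Ω₂ t) * (A t + (-(1/2:ℝ)) • (Ω₁ t * A t - A t * Ω₁ t))) * (Ω₁ t + Ω₂ t)
          + (Ω₁ t + Ω₂ t) * (Ω₁ t + Ω₂ t) * (A t + (-(1/2:ℝ)) • (Ω₁ t * A t - A t * Ω₁ t))))) t := by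
      intro t
      have h1 := (hHd t).add (HQ t)
      have h2 : (fun y => (exp (Ω₁ y + Ω₂ y) - (1 + (Ω₁ y + Ω₂ y)
          + (1/2:ℝ) • ((Ω₁ y + Ω₂ y) * (Ω₁ y + Ω₂ y))
          + (1/6:ℝ) • ((Ω₁ y + Ω₂ y) * (Ω₁ y + Ω₂ y) * (Ω₁ y + Ω₂ y))))
          + (1 + (Ω₁ y + Ω₂ y) + (1/2:ℝ) • ((Ω₁ y + Ω₂ y) * (Ω₁ y + Ω₂ y))
          + (1/6:ℝ) • ((Ω₁ y + Ω₂ y) * (Ω₁ y + Ω₂ y) * (Ω₁ y + Ω₂ y))))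
          = fun y => exp (Ω₁ y + Ω₂ y) := by
        funext y; rw [sub_add_cancel]
      rw [← h2]; exact h1
    have key : ∀ t : ℝ, deriv (fun y => exp (Ω₁ y + Ω₂ y)) t - A t * exp (Ω₁ t + Ω₂ t)
        = ((deriv (fun y => exp (Ω₁ y + Ω₂ y) - (1 + (Ω₁ y + Ω₂ y)
          + (1/2:ℝ) • ((Ω₁ y + Ω₂ y) * (Ω₁ y + Ω₂ y))
          + (1/6:ℝ) • ((Ω₁ y + Ω₂ y) * (Ω₁ y + Ω₂ y) * (Ω₁ y + Ω₂ y)))) t)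
          - A t * (exp (Ω₁ t + Ω₂ t) - (1 + (Ω₁ t + Ω₂ t)
          + (1/2:ℝ) • ((Ω₁ t + Ω₂ t) * (Ω₁ t + Ω₂ t))
          + (1/6:ℝ) • ((Ω₁ t + Ω₂ t) * (Ω₁ t + Ω₂ t) * (Ω₁ t + Ω₂ t)))))
          + ((A t + (-(1/2:ℝ)) • (Ω₁ t * A t - A t * Ω₁ t))
      + (1/2:ℝ) • ((A t + (-(1/2:ℝ)) • (Ω₁ t * A t - A t * Ω₁ t)) * (Ω₁ t + Ω₂ t)
          + (Ω₁ t + Ω₂ t) * (A t + (-(1/2:ℝ)) • (Ω₁ t * A t - A t * Ω₁ t)))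
      + (1/6:ℝ) • (((A t + (-(1/2:ℝ)) • (Ω₁ t * A t - A t * Ω₁ t)) * (Ω₁ t + Ω₂ t)
            + (Ω₁ t + Ω₂ t) * (A t + (-(1/2:ℝ)) • (Ω₁ t * A t - A t * Ω₁ t))) * (Ω₁ t + Ω₂ t)
          + (Ω₁ t + Ω₂ t) * (Ω₁ t + Ω₂ t) * (A t + (-(1/2:ℝ)) • (Ω₁ t * A t - A t * Ω₁ t)))
          - A t * (1 + (Ω₁ t + Ω₂ t) + (1/2:ℝ) • ((Ω₁ t + Ω₂ t) * (Ω₁ t + Ω₂ t))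
          + (1/6:ℝ) • ((Ω₁ t + Ω₂ t) * (Ω₁ t + Ω₂ t) * (Ω₁ t + Ω₂ t)))) := by
      intro t
      rw [show deriv (fun y => exp (Ω₁ y + Ω₂ y)) t = _ from (hgsplit t).deriv, mul_sub]
      abel
    simp only [key]
    exact ((hHdO k l).sub (hAHO k l)).add (((entryCLM k l).isBigO_comp _ _).trans hGO)
  -- final assembly
  intro i j
  have hYent : (fun s => Y₂ s i j) = fun s => ((exp (Ω₁ s + Ω₂ s)) * y₀) i j :=
    funext fun s => by rw [hY₂ s]
  have hgc : ContDiff ℝ ∞ (fun s => exp (Ω₁ s + Ω₂ s)) := hexpc.comp hWc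
  have Hgf : ∀ t, HasDerivAt (fun s => exp (Ω₁ s + Ω₂ s))
      (deriv (fun s => exp (Ω₁ s + Ω₂ s)) t) t := fun t =>
    (hgc.differentiable (by simp) t).hasDerivAt
  have hderY : ∀ t, deriv (fun s => Y₂ s i j) t
      = ((deriv (fun s => exp (Ω₁ s + Ω₂ s)) t) * y₀) i j := by
    intro t
    rw [hYent]
    exact ((entryCLM i j).hasFDerivAt.comp_hasDerivAt t ((Hgf t).mul_const y₀)).deriv
  have goaleq : (fun t : ℝ => deriv (fun s => Y₂ s i j) t - (A t * Y₂ t) i j)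
      = fun t => ∑ m, (deriv (fun s => exp (Ω₁ s + Ω₂ s)) t
          - A t * exp (Ω₁ t + Ω₂ t)) i m * y₀ m j := by
    funext t
    rw [hderY t, hY₂ t, ← Matrix.mul_assoc, ← Matrix.sub_apply, ← Matrix.sub_mul, Matrix.mul_apply]
  rw [goaleq]
  refine Asymptotics.IsBigO.fun_sum fun m _ => ?_
  have := (hFO i m).const_mul_left (y₀ m j)
  refine this.congr' (Filter.Eventually.of_forall fun t => ?_) (Filter.Eventually.of_forall fun t => rfl)
  ring
end

section
/- Let A₀, A₁ ∈ gl(n,ℝ) and h > 0. The one-step Heun RKMK scheme with dexp⁻¹ truncated to two terms, applied to Y' = A(t)Y with A(t₀) = A₀, A(t₀+h) = A₁, produces Y₁ = exp((h/2)(A₀+A₁) − (h²/4)[A₀,A₁])·Y₀; this exponent agrees with the degree-≤2 truncation (in h) of the Magnus expansion with trapezoidal approximation of the integrals, and the scheme is second-order accurate: if A(t) is smooth and Y is the exact solution with Y(t₀)=Y₀, then Y(t₀+h) − Y₁ = O(h³). -/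
set_option linter.unusedSectionVars false
set_option maxHeartbeats 1000000

open NormedSpace Asymptotics Topology

section HeunAuxiliaries
open Set Filter Matrix

theorem exp_rem {𝔸 : Type*} [NormedRing 𝔸] [NormedAlgebra ℝ 𝔸] [CompleteSpace 𝔸] (M : 𝔸) :
    ‖exp M - (1 + M + (2:ℝ)⁻¹ • (M * M))‖ ≤ ‖M‖ ^ 3 * Real.exp ‖M‖ := by
  have hs : Summable (fun k : ℕ => ((k.factorial : ℝ)⁻¹) • M ^ k) := expSeries_summable' M
  have hsplit : ∑ i ∈ Finset.range 3, ((i.factorial : ℝ)⁻¹) • M ^ i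
      + ∑' k : ℕ, (((k+3).factorial : ℝ)⁻¹) • M ^ (k+3)
      = ∑' k : ℕ, ((k.factorial : ℝ)⁻¹) • M ^ k := Summable.sum_add_tsum_nat_add 3 hs
  have hsum3 : ∑ i ∈ Finset.range 3, ((i.factorial : ℝ)⁻¹) • M ^ i
      = 1 + M + (2:ℝ)⁻¹ • (M * M) := by
    rw [Finset.sum_range_succ, Finset.sum_range_succ, Finset.sum_range_one]
    norm_num [Nat.factorial, pow_succ]
  have key : exp M - (1 + M + (2:ℝ)⁻¹ • (M * M))
      = ∑' k : ℕ, (((k+3).factorial : ℝ)⁻¹) • M ^ (k+3) := by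
    simp only [exp_eq_tsum ℝ]
    rw [← hsplit, hsum3]
    abel
  rw [key]
  have hmaj : ∀ k : ℕ, ‖(((k+3).factorial : ℝ)⁻¹) • M ^ (k+3)‖
      ≤ ‖M‖ ^ 3 * (‖M‖ ^ k / (k.factorial : ℝ)) := by
    intro k
    rw [norm_smul]
    have h1 : ‖M ^ (k+3)‖ ≤ ‖M‖ ^ (k+3) := norm_pow_le' M (by omega)
    have h2 : (((k+3).factorial : ℝ))⁻¹ ≤ ((k.factorial : ℝ))⁻¹ := by
      apply inv_anti₀
      · exact_mod_cast Nat.factorial_pos k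
      · exact_mod_cast Nat.factorial_le (by omega)
    calc ‖(((k+3).factorial : ℝ)⁻¹)‖ * ‖M ^ (k+3)‖
        ≤ ((k.factorial : ℝ))⁻¹ * ‖M‖ ^ (k+3) := by
          apply mul_le_mul _ h1 (norm_nonneg _) (by positivity)
          rw [Real.norm_eq_abs, abs_of_nonneg (by positivity)]
          exact h2
      _ = ‖M‖ ^ 3 * (‖M‖ ^ k / (k.factorial : ℝ)) := by
          rw [pow_add]; ring
  have hsummaj : Summable (fun k : ℕ => ‖M‖ ^ 3 * (‖M‖ ^ k / (k.factorial : ℝ))) :=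
    (Real.summable_pow_div_factorial ‖M‖).mul_left _
  calc ‖∑' k : ℕ, (((k+3).factorial : ℝ)⁻¹) • M ^ (k+3)‖
      ≤ ∑' k : ℕ, ‖M‖ ^ 3 * (‖M‖ ^ k / (k.factorial : ℝ)) := by
        apply tsum_of_norm_bounded hsummaj.hasSum hmaj
    _ = ‖M‖ ^ 3 * ∑' k : ℕ, ‖M‖ ^ k / (k.factorial : ℝ) := tsum_mul_left
    _ = ‖M‖ ^ 3 * Real.exp ‖M‖ := by
        simp only [Real.exp_eq_exp_ℝ, exp_eq_tsum_div]

section HeunAux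
attribute [local instance] Matrix.linftyOpNormedAddCommGroup Matrix.linftyOpNormedRing
  Matrix.linftyOpNormedAlgebra Matrix.linftyOpNormedSpace

noncomputable section
variable {n : ℕ}


theorem entry_le_norm (M : Matrix (Fin n) (Fin n) ℝ) (i j : Fin n) : |M i j| ≤ ‖M‖ := by
  rw [Matrix.linfty_opNorm_def]
  have h1 : ‖M i j‖₊ ≤ ∑ q : Fin n, ‖M i q‖₊ :=
    Finset.single_le_sum (f := fun q => ‖M i q‖₊) (fun q _ => zero_le) (Finset.mem_univ j)
  have h2 : (∑ q : Fin n, ‖M i q‖₊) ≤ (Finset.univ : Finset (Fin n)).sup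
      fun p : Fin n => ∑ q : Fin n, ‖M p q‖₊ :=
    Finset.le_sup (f := fun p : Fin n => ∑ q : Fin n, ‖M p q‖₊) (Finset.mem_univ i)
  have := h1.trans h2
  exact_mod_cast this

theorem hasDerivAt_matrix {f : ℝ → Matrix (Fin n) (Fin n) ℝ} {f' : Matrix (Fin n) (Fin n) ℝ}
    {x : ℝ} (h : ∀ p q, HasDerivAt (fun t => f t p q) (f' p q) x) : HasDerivAt f f' x := by
  have h1 : HasDerivAt (fun t => ∑ p : Fin n, ∑ q : Fin n, Matrix.single p q (f t p q))
      (∑ p : Fin n, ∑ q : Fin n, Matrix.single p q (f' p q)) x := by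
    refine HasDerivAt.fun_sum fun p _ => HasDerivAt.fun_sum fun q _ => ?_
    have h2 : HasDerivAt (fun t => (f t p q) • Matrix.single p q (1:ℝ))
        ((f' p q) • Matrix.single p q (1:ℝ)) x := (h p q).smul_const _
    simp [Matrix.smul_single] at h2
    exact h2
  have e1 : (fun t => ∑ p : Fin n, ∑ q : Fin n, Matrix.single p q (f t p q)) = f := by
    funext t; exact (matrix_eq_sum_single (f t)).symm
  have e2 : (∑ p : Fin n, ∑ q : Fin n, Matrix.single p q (f' p q)) = f' :=
    (matrix_eq_sum_single f').symm
  rwa [e1, e2] at h1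

theorem mvt_pow {E : Type*} [NormedAddCommGroup E] [NormedSpace ℝ E] {g g' : ℝ → E} {C : ℝ}
    {k : ℕ} (hd : ∀ x ∈ Icc (0:ℝ) 1, HasDerivAt g (g' x) x) (h0 : g 0 = 0) (hC : 0 ≤ C)
    (hb : ∀ x ∈ Icc (0:ℝ) 1, ‖g' x‖ ≤ C * x ^ k) :
    ∀ x ∈ Icc (0:ℝ) 1, ‖g x‖ ≤ C * x ^ (k+1) := by
  intro x hx
  obtain ⟨hx0, hx1⟩ := hx
  have hsub : Icc (0:ℝ) x ⊆ Icc 0 1 := Icc_subset_Icc le_rfl hx1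
  have key := Convex.norm_image_sub_le_of_norm_hasDerivWithin_le
    (f := g) (f' := g') (C := C * x ^ k) (s := Icc (0:ℝ) x)
    (fun y hy => (hd y (hsub hy)).hasDerivWithinAt)
    (fun y hy => (hb y (hsub hy)).trans (by
      have : y ^ k ≤ x ^ k := pow_le_pow_left₀ hy.1 hy.2 k
      nlinarith [pow_nonneg hy.1 k]))
    (convex_Icc _ _) (left_mem_Icc.2 hx0) (right_mem_Icc.2 hx0)
  rw [h0, sub_zero] at key
  calc ‖g x‖ ≤ C * x ^ k * ‖x - 0‖ := key
    _ = C * x ^ (k+1) := by rw [sub_zero, Real.norm_eq_abs, abs_of_nonneg hx0, pow_succ]; ring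

variable  (A Y : ℝ → Matrix (Fin n) (Fin n) ℝ) (t₀ : ℝ) (Y₀ : Matrix (Fin n) (Fin n) ℝ)

/-- `k`-th derivative of `h ↦ A (t₀ + h)`, entrywise. -/
def Am (k : ℕ) (h : ℝ) : Matrix (Fin n) (Fin n) ℝ :=
  Matrix.of fun p q => deriv^[k] (fun t => A t p q) (t₀ + h)

theorem Am_zero (h : ℝ) : Am A t₀ 0 h = A (t₀ + h) := rfl

def Km (k : ℕ) (h : ℝ) : Matrix (Fin n) (Fin n) ℝ :=
  A t₀ * Am A t₀ k h - Am A t₀ k h * A t₀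

def Bm : ℕ → ℝ → Matrix (Fin n) (Fin n) ℝ
  | 0, h => (2:ℝ)⁻¹ • (A t₀ + Am A t₀ 0 h) - (h/4) • Km A t₀ 0 h
  | (m+1), h => (2:ℝ)⁻¹ • Am A t₀ (m+1) h - (((m:ℝ)+1)/4) • Km A t₀ m h
      - (h/4) • Km A t₀ (m+1) h

def Pm (k : ℕ) (h : ℝ) : Matrix (Fin n) (Fin n) ℝ := Bm A t₀ k h * Y₀

def Ym (h : ℝ) : Matrix (Fin n) (Fin n) ℝ := Y (t₀ + h)

def W0 (h : ℝ) : Matrix (Fin n) (Fin n) ℝ := Am A t₀ 0 h * Ym Y t₀ h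
def W1 (h : ℝ) : Matrix (Fin n) (Fin n) ℝ :=
  Am A t₀ 1 h * Ym Y t₀ h + Am A t₀ 0 h * W0 A Y t₀ h
def W2 (h : ℝ) : Matrix (Fin n) (Fin n) ℝ :=
  (Am A t₀ 2 h * Ym Y t₀ h + Am A t₀ 1 h * W0 A Y t₀ h)
    + (Am A t₀ 1 h * W0 A Y t₀ h + Am A t₀ 0 h * W1 A Y t₀ h)

def R0 (h : ℝ) : Matrix (Fin n) (Fin n) ℝ := Bm A t₀ 0 h * Pm A t₀ Y₀ 0 h
def R1 (h : ℝ) : Matrix (Fin n) (Fin n) ℝ :=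
  Bm A t₀ 1 h * Pm A t₀ Y₀ 0 h + Bm A t₀ 0 h * Pm A t₀ Y₀ 1 h
def R2 (h : ℝ) : Matrix (Fin n) (Fin n) ℝ :=
  (Bm A t₀ 2 h * Pm A t₀ Y₀ 0 h + Bm A t₀ 1 h * Pm A t₀ Y₀ 1 h)
    + (Bm A t₀ 1 h * Pm A t₀ Y₀ 1 h + Bm A t₀ 0 h * Pm A t₀ Y₀ 2 h)
def R3 (h : ℝ) : Matrix (Fin n) (Fin n) ℝ :=
  ((Bm A t₀ 3 h * Pm A t₀ Y₀ 0 h + Bm A t₀ 2 h * Pm A t₀ Y₀ 1 h)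
    + (Bm A t₀ 2 h * Pm A t₀ Y₀ 1 h + Bm A t₀ 1 h * Pm A t₀ Y₀ 2 h))
    + ((Bm A t₀ 2 h * Pm A t₀ Y₀ 1 h + Bm A t₀ 1 h * Pm A t₀ Y₀ 2 h)
    + (Bm A t₀ 1 h * Pm A t₀ Y₀ 2 h + Bm A t₀ 0 h * Pm A t₀ Y₀ 3 h))

def F0 (h : ℝ) : Matrix (Fin n) (Fin n) ℝ :=
  Ym Y t₀ h - Y₀ - h • Pm A t₀ Y₀ 0 h - (h^2/2) • R0 A t₀ Y₀ h
def F1 (h : ℝ) : Matrix (Fin n) (Fin n) ℝ :=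
  W0 A Y t₀ h - (Pm A t₀ Y₀ 0 h + h • Pm A t₀ Y₀ 1 h)
    - (h • R0 A t₀ Y₀ h + (h^2/2) • R1 A t₀ Y₀ h)
def F2 (h : ℝ) : Matrix (Fin n) (Fin n) ℝ :=
  W1 A Y t₀ h - (Pm A t₀ Y₀ 1 h + (Pm A t₀ Y₀ 1 h + h • Pm A t₀ Y₀ 2 h))
    - ((R0 A t₀ Y₀ h + h • R1 A t₀ Y₀ h)
        + (h • R1 A t₀ Y₀ h + (h^2/2) • R2 A t₀ Y₀ h))
def F3 (h : ℝ) : Matrix (Fin n) (Fin n) ℝ :=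
  W2 A Y t₀ h
    - (Pm A t₀ Y₀ 2 h + (Pm A t₀ Y₀ 2 h + (Pm A t₀ Y₀ 2 h + h • Pm A t₀ Y₀ 3 h)))
    - ((R1 A t₀ Y₀ h + (R1 A t₀ Y₀ h + h • R2 A t₀ Y₀ h))
        + ((R1 A t₀ Y₀ h + h • R2 A t₀ Y₀ h)
            + (h • R2 A t₀ Y₀ h + (h^2/2) • R3 A t₀ Y₀ h)))

section derivs
variable (hA : ∀ i j : Fin n, ContDiff ℝ (⊤ : ℕ∞) (fun t => A t i j))
include hA

theorem hasDerivAt_Am (k : ℕ) (x : ℝ) :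
    HasDerivAt (Am A t₀ k) (Am A t₀ (k+1) x) x := by
  apply hasDerivAt_matrix
  intro p q
  have h1 : ContDiff ℝ ((⊤:ℕ∞) : WithTop ℕ∞) (fun t => A t p q) := (hA p q).of_le (by simp)
  have h2 := ContDiff.iterate_deriv k h1
  have h3 : Differentiable ℝ (deriv^[k] fun t => A t p q) :=
    h2.differentiable (by simp)
  have h4 : HasDerivAt (deriv^[k] fun t => A t p q)
      (deriv^[k+1] (fun t => A t p q) (t₀+x)) (t₀+x) := by
    rw [Function.iterate_succ_apply']
    exact (h3 (t₀+x)).hasDerivAt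
  have h5 := HasDerivAt.comp x h4 ((hasDerivAt_id x).const_add t₀)
  simpa [Am, Function.comp_def] using h5

theorem hasDerivAt_Km (k : ℕ) (x : ℝ) :
    HasDerivAt (Km A t₀ k) (Km A t₀ (k+1) x) x := by
  have h := ((hasDerivAt_Am A t₀ hA k x).const_mul (A t₀)).sub
    ((hasDerivAt_Am A t₀ hA k x).mul_const (A t₀))
  exact h

theorem hasDerivAt_Bm (k : ℕ) (x : ℝ) :
    HasDerivAt (Bm A t₀ k) (Bm A t₀ (k+1) x) x := by
  cases k with
  | zero =>
    have h := (((hasDerivAt_Am A t₀ hA 0 x).const_add (A t₀)).const_smul ((2:ℝ)⁻¹)).sub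
      (((hasDerivAt_id x).div_const 4).smul (hasDerivAt_Km A t₀ hA 0 x))
    refine HasDerivAt.congr_deriv (f := Bm A t₀ 0) h ?_
    simp only [Bm, id]
    push_cast
    module
  | succ m =>
    have h := (((hasDerivAt_Am A t₀ hA (m+1) x).const_smul ((2:ℝ)⁻¹)).sub
      ((hasDerivAt_Km A t₀ hA m x).const_smul (((m:ℝ)+1)/4))).sub
      (((hasDerivAt_id x).div_const 4).smul (hasDerivAt_Km A t₀ hA (m+1) x))
    refine HasDerivAt.congr_deriv (f := Bm A t₀ (m+1)) h ?_
    simp only [Bm, id]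
    push_cast
    module

theorem hasDerivAt_Pm (k : ℕ) (x : ℝ) :
    HasDerivAt (Pm A t₀ Y₀ k) (Pm A t₀ Y₀ (k+1) x) x := by
  have h := (hasDerivAt_Bm A t₀ hA k x).mul_const Y₀
  exact h

variable (hode : ∀ (t : ℝ) (i j : Fin n),
    HasDerivAt (fun s => Y s i j) ((A t * Y t) i j) t)
include hode

theorem hasDerivAt_Ym (x : ℝ) : HasDerivAt (Ym Y t₀) (W0 A Y t₀ x) x := by
  apply hasDerivAt_matrix
  intro p q
  have h1 := hode (t₀ + x) p q
  have h2 := HasDerivAt.comp x h1 ((hasDerivAt_id x).const_add t₀)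
  simp [Ym, W0, Am, Function.comp_def] at h2
  exact h2

theorem hasDerivAt_W0 (x : ℝ) : HasDerivAt (W0 A Y t₀) (W1 A Y t₀ x) x := by
  have h := (hasDerivAt_Am A t₀ hA 0 x).mul (hasDerivAt_Ym A Y t₀ hA hode x)
  exact h

theorem hasDerivAt_W1 (x : ℝ) : HasDerivAt (W1 A Y t₀) (W2 A Y t₀ x) x := by
  have h := ((hasDerivAt_Am A t₀ hA 1 x).mul (hasDerivAt_Ym A Y t₀ hA hode x)).add
    ((hasDerivAt_Am A t₀ hA 0 x).mul (hasDerivAt_W0 A Y t₀ hA hode x))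
  exact h

omit hode

theorem hasDerivAt_R0 (x : ℝ) : HasDerivAt (R0 A t₀ Y₀) (R1 A t₀ Y₀ x) x := by
  have h := (hasDerivAt_Bm A t₀ hA 0 x).mul (hasDerivAt_Pm A t₀ Y₀ hA 0 x)
  exact h

theorem hasDerivAt_R1 (x : ℝ) : HasDerivAt (R1 A t₀ Y₀) (R2 A t₀ Y₀ x) x := by
  have h := ((hasDerivAt_Bm A t₀ hA 1 x).mul (hasDerivAt_Pm A t₀ Y₀ hA 0 x)).add
    ((hasDerivAt_Bm A t₀ hA 0 x).mul (hasDerivAt_Pm A t₀ Y₀ hA 1 x))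
  exact h

theorem hasDerivAt_R2 (x : ℝ) : HasDerivAt (R2 A t₀ Y₀) (R3 A t₀ Y₀ x) x := by
  have h := (((hasDerivAt_Bm A t₀ hA 2 x).mul (hasDerivAt_Pm A t₀ Y₀ hA 0 x)).add
    ((hasDerivAt_Bm A t₀ hA 1 x).mul (hasDerivAt_Pm A t₀ Y₀ hA 1 x))).add
    (((hasDerivAt_Bm A t₀ hA 1 x).mul (hasDerivAt_Pm A t₀ Y₀ hA 1 x)).add
    ((hasDerivAt_Bm A t₀ hA 0 x).mul (hasDerivAt_Pm A t₀ Y₀ hA 2 x)))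
  exact h

include hode

theorem hasDerivAt_F0 (x : ℝ) : HasDerivAt (F0 A Y t₀ Y₀) (F1 A Y t₀ Y₀ x) x := by
  have h := (((hasDerivAt_Ym A Y t₀ hA hode x).sub_const Y₀).sub
      ((hasDerivAt_id x).smul (hasDerivAt_Pm A t₀ Y₀ hA 0 x))).sub
      (((hasDerivAt_pow 2 x).div_const 2).smul (hasDerivAt_R0 A t₀ Y₀ hA x))
  have h' : HasDerivAt (F0 A Y t₀ Y₀)
      (W0 A Y t₀ x - (x • Pm A t₀ Y₀ 1 x + (1:ℝ) • Pm A t₀ Y₀ 0 x)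
        - ((x^2/2) • R1 A t₀ Y₀ x + (2*x^1/2) • R0 A t₀ Y₀ x)) x := by
    refine h.congr_deriv ?_
    norm_num
  convert h' using 1
  simp only [F1]
  module

theorem hasDerivAt_F1 (x : ℝ) : HasDerivAt (F1 A Y t₀ Y₀) (F2 A Y t₀ Y₀ x) x := by
  have h := ((hasDerivAt_W0 A Y t₀ hA hode x).sub
      ((hasDerivAt_Pm A t₀ Y₀ hA 0 x).add
        ((hasDerivAt_id x).smul (hasDerivAt_Pm A t₀ Y₀ hA 1 x)))).sub
      (((hasDerivAt_id x).smul (hasDerivAt_R0 A t₀ Y₀ hA x)).add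
        (((hasDerivAt_pow 2 x).div_const 2).smul (hasDerivAt_R1 A t₀ Y₀ hA x)))
  have h' : HasDerivAt (F1 A Y t₀ Y₀)
      (W1 A Y t₀ x - (Pm A t₀ Y₀ 1 x + (x • Pm A t₀ Y₀ 2 x + (1:ℝ) • Pm A t₀ Y₀ 1 x))
        - ((x • R1 A t₀ Y₀ x + (1:ℝ) • R0 A t₀ Y₀ x)
            + ((x^2/2) • R2 A t₀ Y₀ x + (2*x^1/2) • R1 A t₀ Y₀ x))) x := by
    refine h.congr_deriv ?_
    norm_num
  convert h' using 1
  simp only [F2]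
  module

theorem hasDerivAt_F2 (x : ℝ) : HasDerivAt (F2 A Y t₀ Y₀) (F3 A Y t₀ Y₀ x) x := by
  have h := ((hasDerivAt_W1 A Y t₀ hA hode x).sub
      ((hasDerivAt_Pm A t₀ Y₀ hA 1 x).add
        ((hasDerivAt_Pm A t₀ Y₀ hA 1 x).add
          ((hasDerivAt_id x).smul (hasDerivAt_Pm A t₀ Y₀ hA 2 x))))).sub
      (((hasDerivAt_R0 A t₀ Y₀ hA x).add
          ((hasDerivAt_id x).smul (hasDerivAt_R1 A t₀ Y₀ hA x))).add
        (((hasDerivAt_id x).smul (hasDerivAt_R1 A t₀ Y₀ hA x)).add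
          (((hasDerivAt_pow 2 x).div_const 2).smul (hasDerivAt_R2 A t₀ Y₀ hA x))))
  have h' : HasDerivAt (F2 A Y t₀ Y₀)
      (W2 A Y t₀ x
        - (Pm A t₀ Y₀ 2 x + (Pm A t₀ Y₀ 2 x + (x • Pm A t₀ Y₀ 3 x + (1:ℝ) • Pm A t₀ Y₀ 2 x)))
        - ((R1 A t₀ Y₀ x + (x • R2 A t₀ Y₀ x + (1:ℝ) • R1 A t₀ Y₀ x))
            + ((x • R2 A t₀ Y₀ x + (1:ℝ) • R1 A t₀ Y₀ x)
                + ((x^2/2) • R3 A t₀ Y₀ x + (2*x^1/2) • R2 A t₀ Y₀ x)))) x := by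
    refine h.congr_deriv ?_
    norm_num
  convert h' using 1
  simp only [F3]
  module


omit hode

theorem continuous_Am (k : ℕ) : Continuous (Am A t₀ k) :=
  continuous_iff_continuousAt.2 fun x => (hasDerivAt_Am A t₀ hA k x).continuousAt

theorem continuous_Bm (k : ℕ) : Continuous (Bm A t₀ k) :=
  continuous_iff_continuousAt.2 fun x => (hasDerivAt_Bm A t₀ hA k x).continuousAt

theorem continuous_Pm (k : ℕ) : Continuous (Pm A t₀ Y₀ k) :=
  continuous_iff_continuousAt.2 fun x => (hasDerivAt_Pm A t₀ Y₀ hA k x).continuousAt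

theorem continuous_R1 : Continuous (R1 A t₀ Y₀) :=
  continuous_iff_continuousAt.2 fun x => (hasDerivAt_R1 A t₀ Y₀ hA x).continuousAt

theorem continuous_R2 : Continuous (R2 A t₀ Y₀) :=
  continuous_iff_continuousAt.2 fun x => (hasDerivAt_R2 A t₀ Y₀ hA x).continuousAt

theorem continuous_R3 : Continuous (R3 A t₀ Y₀) := by
  have cB := fun k => continuous_Bm A t₀ hA k
  have cP := fun k => continuous_Pm A t₀ Y₀ hA k
  exact ((((cB 3).mul (cP 0)).add ((cB 2).mul (cP 1))).add
      (((cB 2).mul (cP 1)).add ((cB 1).mul (cP 2)))).add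
    ((((cB 2).mul (cP 1)).add ((cB 1).mul (cP 2))).add
      (((cB 1).mul (cP 2)).add ((cB 0).mul (cP 3))))

include hode

theorem continuous_Ym : Continuous (Ym Y t₀) :=
  continuous_iff_continuousAt.2 fun x => (hasDerivAt_Ym A Y t₀ hA hode x).continuousAt

theorem continuous_W0 : Continuous (W0 A Y t₀) :=
  continuous_iff_continuousAt.2 fun x => (hasDerivAt_W0 A Y t₀ hA hode x).continuousAt

theorem continuous_W1 : Continuous (W1 A Y t₀) :=
  continuous_iff_continuousAt.2 fun x => (hasDerivAt_W1 A Y t₀ hA hode x).continuousAt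

theorem continuous_W2 : Continuous (W2 A Y t₀) := by
  have cA := fun k => continuous_Am A t₀ hA k
  have cY := continuous_Ym A Y t₀ hA hode
  have cW0 := continuous_W0 A Y t₀ hA hode
  have cW1 := continuous_W1 A Y t₀ hA hode
  exact (((cA 2).mul cY).add ((cA 1).mul cW0)).add (((cA 1).mul cW0).add ((cA 0).mul cW1))

theorem continuous_F3 : Continuous (F3 A Y t₀ Y₀) := by
  have cP := fun k => continuous_Pm A t₀ Y₀ hA k
  have cR1 := continuous_R1 A t₀ Y₀ hA
  have cR2 := continuous_R2 A t₀ Y₀ hA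
  have cR3 := continuous_R3 A t₀ Y₀ hA
  have cW2 := continuous_W2 A Y t₀ hA hode
  exact (cW2.sub ((cP 2).add ((cP 2).add ((cP 2).add (continuous_id.smul (cP 3)))))).sub
    ((cR1.add (cR1.add (continuous_id.smul cR2))).add
      ((cR1.add (continuous_id.smul cR2)).add
        ((continuous_id.smul cR2).add (((continuous_pow 2).div_const 2).smul cR3))))

end derivs

theorem Km_zero_zero : Km A t₀ 0 0 = 0 := by
  simp [Km, Am_zero]

theorem Bm_zero_zero : Bm A t₀ 0 0 = A t₀ := by
  have h := Km_zero_zero A t₀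
  simp only [Bm, Am_zero, add_zero, h]
  module

theorem Bm_one_zero : Bm A t₀ 1 0 = (2:ℝ)⁻¹ • Am A t₀ 1 0 := by
  have h := Km_zero_zero A t₀
  simp only [Bm, h, Nat.cast_zero]
  module

theorem F0_zero (hinit : Y t₀ = Y₀) : F0 A Y t₀ Y₀ 0 = 0 := by
  simp [F0, Ym, hinit]

theorem F1_zero (hinit : Y t₀ = Y₀) : F1 A Y t₀ Y₀ 0 = 0 := by
  simp [F1, W0, Pm, Ym, Am_zero, Bm_zero_zero, hinit]

theorem F2_zero (hinit : Y t₀ = Y₀) : F2 A Y t₀ Y₀ 0 = 0 := by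
  simp only [F2, W1, W0, Pm, R0, Ym, Am_zero, add_zero, Bm_zero_zero, Bm_one_zero, hinit,
    zero_smul, smul_zero, smul_mul_assoc]
  module

theorem aux_main
    (hA' : ∀ i j : Fin n, ContDiff ℝ (⊤ : ℕ∞) (fun t => A t i j))
    (hode' : ∀ (t : ℝ) (i j : Fin n),
      HasDerivAt (fun s => Y s i j) ((A t * Y t) i j) t)
    (hinit : Y t₀ = Y₀) (i j : Fin n) :
    (fun h : ℝ => Y (t₀ + h) i j
      - (exp ((h/2) • (A t₀ + A (t₀ + h))
          - (h^2/4) • (A t₀ * A (t₀ + h) - A (t₀ + h) * A t₀)) * Y₀) i j)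
      =O[𝓝[>] (0:ℝ)] (fun h : ℝ => h ^ 3) := by
  obtain ⟨C, hC⟩ := (isCompact_Icc (a := (0:ℝ)) (b := 1)).exists_bound_of_continuousOn
    ((continuous_F3 A Y t₀ Y₀ hA' hode').continuousOn)
  set C' := max C 0 with hC'def
  have hC'0 : (0:ℝ) ≤ C' := le_max_right _ _
  have h3b : ∀ x ∈ Icc (0:ℝ) 1, ‖F3 A Y t₀ Y₀ x‖ ≤ C' * x ^ 0 := fun x hx => by
    rw [pow_zero, mul_one]
    exact (hC x hx).trans (le_max_left _ _)
  have h2b := mvt_pow (fun x _ => hasDerivAt_F2 A Y t₀ Y₀ hA' hode' x)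
    (F2_zero A Y t₀ Y₀ hinit) hC'0 h3b
  have h1b := mvt_pow (fun x _ => hasDerivAt_F1 A Y t₀ Y₀ hA' hode' x)
    (F1_zero A Y t₀ Y₀ hinit) hC'0 h2b
  have h0b := mvt_pow (fun x _ => hasDerivAt_F0 A Y t₀ Y₀ hA' hode' x)
    (F0_zero A Y t₀ Y₀ hinit) hC'0 h1b
  obtain ⟨K, hK⟩ := (isCompact_Icc (a := (0:ℝ)) (b := 1)).exists_bound_of_continuousOn
    ((continuous_Bm A t₀ hA' 0).continuousOn)
  set K' := max K 0 with hK'def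
  have hK'0 : (0:ℝ) ≤ K' := le_max_right _ _
  rw [isBigO_iff]
  refine ⟨C' + K' ^ 3 * Real.exp K' * ‖Y₀‖, ?_⟩
  filter_upwards [Ioc_mem_nhdsGT (zero_lt_one (α := ℝ))] with h hh
  obtain ⟨hh0, hh1⟩ := hh
  have hhIcc : h ∈ Icc (0:ℝ) 1 := ⟨le_of_lt hh0, hh1⟩
  set M : Matrix (Fin n) (Fin n) ℝ := h • Bm A t₀ 0 h with hMdef
  have hΦM : (h/2) • (A t₀ + A (t₀ + h))
      - (h^2/4) • (A t₀ * A (t₀ + h) - A (t₀ + h) * A t₀) = M := by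
    rw [hMdef]
    simp only [Bm, Km, Am_zero]
    module
  have hQ : F0 A Y t₀ Y₀ h = Ym Y t₀ h - (1 + M + (2:ℝ)⁻¹ • (M * M)) * Y₀ := by
    rw [hMdef]
    simp only [F0, Pm, R0, add_mul, one_mul, smul_mul_assoc, mul_smul_comm, mul_assoc]
    module
  have hmat : Y (t₀ + h) - exp M * Y₀
      = F0 A Y t₀ Y₀ h + ((1 + M + (2:ℝ)⁻¹ • (M * M)) - exp M) * Y₀ := by
    rw [hQ]
    simp only [Ym, sub_mul]
    abel
  have hentry : Y (t₀ + h) i j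
      - (exp ((h/2) • (A t₀ + A (t₀ + h))
          - (h^2/4) • (A t₀ * A (t₀ + h) - A (t₀ + h) * A t₀)) * Y₀) i j
      = F0 A Y t₀ Y₀ h i j + (((1 + M + (2:ℝ)⁻¹ • (M * M)) - exp M) * Y₀) i j := by
    rw [hΦM]
    have := congrFun (congrFun hmat i) j
    simpa [Matrix.sub_apply, Matrix.add_apply] using this
  have e1 : |F0 A Y t₀ Y₀ h i j| ≤ C' * h ^ 3 := by
    refine (entry_le_norm _ i j).trans ?_
    simpa using h0b h hhIcc
  have hMnorm : ‖M‖ ≤ h * K' := by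
    rw [hMdef, norm_smul, Real.norm_eq_abs, abs_of_pos hh0]
    exact mul_le_mul_of_nonneg_left ((hK h hhIcc).trans (le_max_left _ _)) (le_of_lt hh0)
  have hM1 : ‖M‖ ≤ K' := hMnorm.trans (by nlinarith)
  have e2 : ‖(1 + M + (2:ℝ)⁻¹ • (M * M)) - exp M‖ ≤ h ^ 3 * (K' ^ 3 * Real.exp K') := by
    rw [norm_sub_rev]
    refine (exp_rem M).trans ?_
    have p1 : ‖M‖ ^ 3 ≤ (h * K') ^ 3 := pow_le_pow_left₀ (norm_nonneg _) hMnorm 3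
    have p2 : Real.exp ‖M‖ ≤ Real.exp K' := Real.exp_le_exp.2 hM1
    calc ‖M‖ ^ 3 * Real.exp ‖M‖ ≤ (h * K') ^ 3 * Real.exp K' :=
          mul_le_mul p1 p2 (Real.exp_nonneg _) (by positivity)
      _ = h ^ 3 * (K' ^ 3 * Real.exp K') := by ring
  have e3 : |(((1 + M + (2:ℝ)⁻¹ • (M * M)) - exp M) * Y₀) i j|
      ≤ h ^ 3 * (K' ^ 3 * Real.exp K') * ‖Y₀‖ := by
    refine (entry_le_norm _ i j).trans ?_
    refine (norm_mul_le _ _).trans ?_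
    exact mul_le_mul_of_nonneg_right e2 (norm_nonneg _)
  rw [hentry]
  have habs : |F0 A Y t₀ Y₀ h i j + (((1 + M + (2:ℝ)⁻¹ • (M * M)) - exp M) * Y₀) i j|
      ≤ C' * h ^ 3 + h ^ 3 * (K' ^ 3 * Real.exp K') * ‖Y₀‖ :=
    (abs_add_le _ _).trans (add_le_add e1 e3)
  have hn3 : ‖h ^ 3‖ = h ^ 3 := by
    rw [Real.norm_eq_abs, abs_of_pos (by positivity)]
  rw [Real.norm_eq_abs, hn3]
  nlinarith [habs]

end
end HeunAux


end HeunAuxiliaries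

/-- Let `A : ℝ → gl(n,ℝ)` be smooth, `t₀ ∈ ℝ`, and for a
step size `h > 0` write `A₀ = A(t₀)`, `A₁ = A(t₀ + h)`.  The one-step Heun
RKMK scheme with `dexp⁻¹` truncated to two terms produces
`Y₁(h) = exp((h/2)(A₀+A₁) − (h²/4)[A₀,A₁]) · Y₀`; this exponent agrees with
the degree-`≤ 2` truncation in `h` of the Magnus expansion with trapezoidal
approximation of the integrals (trapezoidal `Ω₁ ≈ (h/2)(A₀+A₁)`,
`Ω₂ ≈ −(h²/4)[A₀,A₁]`), and the scheme is second-order accurate: if `Y` is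
the exact solution of `Y' = A(t)Y` with `Y(t₀) = Y₀`, then
`Y(t₀+h) − Y₁(h) = O(h³)` as `h → 0⁺` (entrywise). -/
theorem heun_rkmk_is_trapezoidal_magnus_and_second_order {n : ℕ}
    (A Y : ℝ → Matrix (Fin n) (Fin n) ℝ) (t₀ : ℝ)
    (Y₀ : Matrix (Fin n) (Fin n) ℝ)
    (hA : ∀ i j : Fin n, ContDiff ℝ (⊤ : ℕ∞) (fun t => A t i j))
    (hode : ∀ (t : ℝ) (i j : Fin n),
      HasDerivAt (fun s => Y s i j) ((A t * Y t) i j) t)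
    (hinit : Y t₀ = Y₀)
    -- the Heun RKMK data, as functions of the step size h:
    (f₁ f₂ Φ : ℝ → Matrix (Fin n) (Fin n) ℝ)
    (Y₁ : ℝ → Matrix (Fin n) (Fin n) ℝ)
    (hf₁ : ∀ h : ℝ, f₁ h = A t₀)
    -- `u₂ = h • A t₀`, `f̃₂ = dexp⁻¹_{u₂} A₁ ≈ A₁ − (1/2)[u₂, A₁]`:
    (hf₂ : ∀ h : ℝ, f₂ h = A (t₀ + h)
      - (1/2 : ℝ) • ((h • A t₀) * A (t₀ + h) - A (t₀ + h) * (h • A t₀)))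
    (hΦ : ∀ h : ℝ, Φ h = (h/2) • (f₁ h + f₂ h))
    (hY₁ : ∀ h : ℝ, Y₁ h = exp (Φ h) * Y₀) :
    -- the exponent is the degree-≤2 trapezoidal Magnus exponent:
    (∀ h : ℝ, 0 < h → Φ h = (h/2) • (A t₀ + A (t₀ + h))
      - (h^2/4) • (A t₀ * A (t₀ + h) - A (t₀ + h) * A t₀)) ∧
    -- second-order accuracy:
    (∀ i j : Fin n,
      (fun h : ℝ => Y (t₀ + h) i j - Y₁ h i j)
        =O[𝓝[>] (0:ℝ)] (fun h : ℝ => h ^ 3)) := by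
  have hΦall : ∀ h : ℝ, Φ h = (h/2) • (A t₀ + A (t₀ + h))
      - (h^2/4) • (A t₀ * A (t₀ + h) - A (t₀ + h) * A t₀) := by
    intro h
    rw [hΦ h, hf₁ h, hf₂ h]
    simp only [smul_mul_assoc, mul_smul_comm]
    module
  refine ⟨fun h _ => hΦall h, ?_⟩
  intro i j
  have key := aux_main A Y t₀ Y₀ hA hode hinit i j
  have heq : (fun h : ℝ => Y (t₀ + h) i j - Y₁ h i j)
      = (fun h : ℝ => Y (t₀ + h) i j
        - (exp ((h/2) • (A t₀ + A (t₀ + h))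
            - (h^2/4) • (A t₀ * A (t₀ + h) - A (t₀ + h) * A t₀)) * Y₀) i j) := by
    funext h
    rw [hY₁ h, hΦall h]
  rw [heq]
  exact key
end
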